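/- arXiv:2502.13876 — 7 statements merged into one kernel-verified Lean document; each statement's English description precedes it below -/
import Mathlib

section
/- Every 2-edge-colouring of the complete graph K_8 contains two vertex-disjoint monochromatic triangles. -/
/-- A monochromatic triangle in a 2-edge-coloured complete graph on `Fin n`. -/
def IsMonoTri {n : ℕ} (χ : Fin n → Fin n → Bool) (t : Finset (Fin n)) : Prop :=
  t.card = 3 ∧ ∃ c : Bool, ∀ x ∈ t, ∀ y ∈ t, x ≠ y → χ x y = c

set_option maxRecDepth 100000

abbrev W8 := (Fin 8 × Fin 8 × Fin 8) × (Nat × Nat × Nat)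

def K8eidx (a b : Fin 8) : Nat :=
  if a.val < b.val then b.val*(b.val-1)/2 + a.val else a.val*(a.val-1)/2 + b.val

def K8S (n : Nat) : Nat := 1 <<< (2^n)

def K8EM : Nat → Nat → Nat
  | 0, _ => 0
  | n+1, i => if i = n then (K8S n - 1) <<< (2^n) else K8EM n i ||| (K8EM n i <<< (2^n))

def K8EMH (n h i : Nat) : Nat :=
  if i < n then K8EM n i else if h.testBit (i - n) then K8S n - 1 else 0

def K8EMHc (n h i : Nat) : Nat := (K8S n - 1) ^^^ K8EMH n h i
def K8pairs : List (W8 × List W8) :=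
  [(((0,1,2),(0,1,2)),[((3,4,5),(9,13,14)),((3,4,6),(9,18,19)),((3,4,7),(9,24,25)),((3,5,6),(13,18,20)),((3,5,7),(13,24,26)),((3,6,7),(18,24,27)),((4,5,6),(14,19,20)),((4,5,7),(14,25,26)),((4,6,7),(19,25,27)),((5,6,7),(20,26,27))]),
   (((0,1,3),(0,3,4)),[((2,4,5),(8,12,14)),((2,4,6),(8,17,19)),((2,4,7),(8,23,25)),((2,5,6),(12,17,20)),((2,5,7),(12,23,26)),((2,6,7),(17,23,27)),((4,5,6),(14,19,20)),((4,5,7),(14,25,26)),((4,6,7),(19,25,27)),((5,6,7),(20,26,27))]),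
   (((0,1,4),(0,6,7)),[((2,3,5),(5,12,13)),((2,3,6),(5,17,18)),((2,3,7),(5,23,24)),((2,5,6),(12,17,20)),((2,5,7),(12,23,26)),((2,6,7),(17,23,27)),((3,5,6),(13,18,20)),((3,5,7),(13,24,26)),((3,6,7),(18,24,27)),((5,6,7),(20,26,27))]),
   (((0,1,5),(0,10,11)),[((2,3,4),(5,8,9)),((2,3,6),(5,17,18)),((2,3,7),(5,23,24)),((2,4,6),(8,17,19)),((2,4,7),(8,23,25)),((2,6,7),(17,23,27)),((3,4,6),(9,18,19)),((3,4,7),(9,24,25)),((3,6,7),(18,24,27)),((4,6,7),(19,25,27))]),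
   (((0,1,6),(0,15,16)),[((2,3,4),(5,8,9)),((2,3,5),(5,12,13)),((2,3,7),(5,23,24)),((2,4,5),(8,12,14)),((2,4,7),(8,23,25)),((2,5,7),(12,23,26)),((3,4,5),(9,13,14)),((3,4,7),(9,24,25)),((3,5,7),(13,24,26)),((4,5,7),(14,25,26))]),
   (((0,1,7),(0,21,22)),[((2,3,4),(5,8,9)),((2,3,5),(5,12,13)),((2,3,6),(5,17,18)),((2,4,5),(8,12,14)),((2,4,6),(8,17,19)),((2,5,6),(12,17,20)),((3,4,5),(9,13,14)),((3,4,6),(9,18,19)),((3,5,6),(13,18,20)),((4,5,6),(14,19,20))]),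
   (((0,2,3),(1,3,5)),[((1,4,5),(7,11,14)),((1,4,6),(7,16,19)),((1,4,7),(7,22,25)),((1,5,6),(11,16,20)),((1,5,7),(11,22,26)),((1,6,7),(16,22,27)),((4,5,6),(14,19,20)),((4,5,7),(14,25,26)),((4,6,7),(19,25,27)),((5,6,7),(20,26,27))]),
   (((0,2,4),(1,6,8)),[((1,3,5),(4,11,13)),((1,3,6),(4,16,18)),((1,3,7),(4,22,24)),((1,5,6),(11,16,20)),((1,5,7),(11,22,26)),((1,6,7),(16,22,27)),((3,5,6),(13,18,20)),((3,5,7),(13,24,26)),((3,6,7),(18,24,27)),((5,6,7),(20,26,27))]),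
   (((0,2,5),(1,10,12)),[((1,3,4),(4,7,9)),((1,3,6),(4,16,18)),((1,3,7),(4,22,24)),((1,4,6),(7,16,19)),((1,4,7),(7,22,25)),((1,6,7),(16,22,27)),((3,4,6),(9,18,19)),((3,4,7),(9,24,25)),((3,6,7),(18,24,27)),((4,6,7),(19,25,27))]),
   (((0,2,6),(1,15,17)),[((1,3,4),(4,7,9)),((1,3,5),(4,11,13)),((1,3,7),(4,22,24)),((1,4,5),(7,11,14)),((1,4,7),(7,22,25)),((1,5,7),(11,22,26)),((3,4,5),(9,13,14)),((3,4,7),(9,24,25)),((3,5,7),(13,24,26)),((4,5,7),(14,25,26))]),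
   (((0,2,7),(1,21,23)),[((1,3,4),(4,7,9)),((1,3,5),(4,11,13)),((1,3,6),(4,16,18)),((1,4,5),(7,11,14)),((1,4,6),(7,16,19)),((1,5,6),(11,16,20)),((3,4,5),(9,13,14)),((3,4,6),(9,18,19)),((3,5,6),(13,18,20)),((4,5,6),(14,19,20))]),
   (((0,3,4),(3,6,9)),[((1,2,5),(2,11,12)),((1,2,6),(2,16,17)),((1,2,7),(2,22,23)),((1,5,6),(11,16,20)),((1,5,7),(11,22,26)),((1,6,7),(16,22,27)),((2,5,6),(12,17,20)),((2,5,7),(12,23,26)),((2,6,7),(17,23,27)),((5,6,7),(20,26,27))]),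
   (((0,3,5),(3,10,13)),[((1,2,4),(2,7,8)),((1,2,6),(2,16,17)),((1,2,7),(2,22,23)),((1,4,6),(7,16,19)),((1,4,7),(7,22,25)),((1,6,7),(16,22,27)),((2,4,6),(8,17,19)),((2,4,7),(8,23,25)),((2,6,7),(17,23,27)),((4,6,7),(19,25,27))]),
   (((0,3,6),(3,15,18)),[((1,2,4),(2,7,8)),((1,2,5),(2,11,12)),((1,2,7),(2,22,23)),((1,4,5),(7,11,14)),((1,4,7),(7,22,25)),((1,5,7),(11,22,26)),((2,4,5),(8,12,14)),((2,4,7),(8,23,25)),((2,5,7),(12,23,26)),((4,5,7),(14,25,26))]),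
   (((0,3,7),(3,21,24)),[((1,2,4),(2,7,8)),((1,2,5),(2,11,12)),((1,2,6),(2,16,17)),((1,4,5),(7,11,14)),((1,4,6),(7,16,19)),((1,5,6),(11,16,20)),((2,4,5),(8,12,14)),((2,4,6),(8,17,19)),((2,5,6),(12,17,20)),((4,5,6),(14,19,20))]),
   (((0,4,5),(6,10,14)),[((1,2,3),(2,4,5)),((1,2,6),(2,16,17)),((1,2,7),(2,22,23)),((1,3,6),(4,16,18)),((1,3,7),(4,22,24)),((1,6,7),(16,22,27)),((2,3,6),(5,17,18)),((2,3,7),(5,23,24)),((2,6,7),(17,23,27)),((3,6,7),(18,24,27))]),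
   (((0,4,6),(6,15,19)),[((1,2,3),(2,4,5)),((1,2,5),(2,11,12)),((1,2,7),(2,22,23)),((1,3,5),(4,11,13)),((1,3,7),(4,22,24)),((1,5,7),(11,22,26)),((2,3,5),(5,12,13)),((2,3,7),(5,23,24)),((2,5,7),(12,23,26)),((3,5,7),(13,24,26))]),
   (((0,4,7),(6,21,25)),[((1,2,3),(2,4,5)),((1,2,5),(2,11,12)),((1,2,6),(2,16,17)),((1,3,5),(4,11,13)),((1,3,6),(4,16,18)),((1,5,6),(11,16,20)),((2,3,5),(5,12,13)),((2,3,6),(5,17,18)),((2,5,6),(12,17,20)),((3,5,6),(13,18,20))]),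
   (((0,5,6),(10,15,20)),[((1,2,3),(2,4,5)),((1,2,4),(2,7,8)),((1,2,7),(2,22,23)),((1,3,4),(4,7,9)),((1,3,7),(4,22,24)),((1,4,7),(7,22,25)),((2,3,4),(5,8,9)),((2,3,7),(5,23,24)),((2,4,7),(8,23,25)),((3,4,7),(9,24,25))]),
   (((0,5,7),(10,21,26)),[((1,2,3),(2,4,5)),((1,2,4),(2,7,8)),((1,2,6),(2,16,17)),((1,3,4),(4,7,9)),((1,3,6),(4,16,18)),((1,4,6),(7,16,19)),((2,3,4),(5,8,9)),((2,3,6),(5,17,18)),((2,4,6),(8,17,19)),((3,4,6),(9,18,19))]),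
   (((0,6,7),(15,21,27)),[((1,2,3),(2,4,5)),((1,2,4),(2,7,8)),((1,2,5),(2,11,12)),((1,3,4),(4,7,9)),((1,3,5),(4,11,13)),((1,4,5),(7,11,14)),((2,3,4),(5,8,9)),((2,3,5),(5,12,13)),((2,4,5),(8,12,14)),((3,4,5),(9,13,14))]),
   (((1,2,3),(2,4,5)),[((4,5,6),(14,19,20)),((4,5,7),(14,25,26)),((4,6,7),(19,25,27)),((5,6,7),(20,26,27))]),
   (((1,2,4),(2,7,8)),[((3,5,6),(13,18,20)),((3,5,7),(13,24,26)),((3,6,7),(18,24,27)),((5,6,7),(20,26,27))]),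
   (((1,2,5),(2,11,12)),[((3,4,6),(9,18,19)),((3,4,7),(9,24,25)),((3,6,7),(18,24,27)),((4,6,7),(19,25,27))]),
   (((1,2,6),(2,16,17)),[((3,4,5),(9,13,14)),((3,4,7),(9,24,25)),((3,5,7),(13,24,26)),((4,5,7),(14,25,26))]),
   (((1,2,7),(2,22,23)),[((3,4,5),(9,13,14)),((3,4,6),(9,18,19)),((3,5,6),(13,18,20)),((4,5,6),(14,19,20))]),
   (((1,3,4),(4,7,9)),[((2,5,6),(12,17,20)),((2,5,7),(12,23,26)),((2,6,7),(17,23,27)),((5,6,7),(20,26,27))]),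
   (((1,3,5),(4,11,13)),[((2,4,6),(8,17,19)),((2,4,7),(8,23,25)),((2,6,7),(17,23,27)),((4,6,7),(19,25,27))]),
   (((1,3,6),(4,16,18)),[((2,4,5),(8,12,14)),((2,4,7),(8,23,25)),((2,5,7),(12,23,26)),((4,5,7),(14,25,26))]),
   (((1,3,7),(4,22,24)),[((2,4,5),(8,12,14)),((2,4,6),(8,17,19)),((2,5,6),(12,17,20)),((4,5,6),(14,19,20))]),
   (((1,4,5),(7,11,14)),[((2,3,6),(5,17,18)),((2,3,7),(5,23,24)),((2,6,7),(17,23,27)),((3,6,7),(18,24,27))]),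
   (((1,4,6),(7,16,19)),[((2,3,5),(5,12,13)),((2,3,7),(5,23,24)),((2,5,7),(12,23,26)),((3,5,7),(13,24,26))]),
   (((1,4,7),(7,22,25)),[((2,3,5),(5,12,13)),((2,3,6),(5,17,18)),((2,5,6),(12,17,20)),((3,5,6),(13,18,20))]),
   (((1,5,6),(11,16,20)),[((2,3,4),(5,8,9)),((2,3,7),(5,23,24)),((2,4,7),(8,23,25)),((3,4,7),(9,24,25))]),
   (((1,5,7),(11,22,26)),[((2,3,4),(5,8,9)),((2,3,6),(5,17,18)),((2,4,6),(8,17,19)),((3,4,6),(9,18,19))]),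
   (((1,6,7),(16,22,27)),[((2,3,4),(5,8,9)),((2,3,5),(5,12,13)),((2,4,5),(8,12,14)),((3,4,5),(9,13,14))]),
   (((2,3,4),(5,8,9)),[((5,6,7),(20,26,27))]),
   (((2,3,5),(5,12,13)),[((4,6,7),(19,25,27))]),
   (((2,3,6),(5,17,18)),[((4,5,7),(14,25,26))]),
   (((2,3,7),(5,23,24)),[((4,5,6),(14,19,20))]),
   (((2,4,5),(8,12,14)),[((3,6,7),(18,24,27))]),
   (((2,4,6),(8,17,19)),[((3,5,7),(13,24,26))]),
   (((2,4,7),(8,23,25)),[((3,5,6),(13,18,20))]),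
   (((2,5,6),(12,17,20)),[((3,4,7),(9,24,25))]),
   (((2,5,7),(12,23,26)),[((3,4,6),(9,18,19))]),
   (((2,6,7),(17,23,27)),[((3,4,5),(9,13,14))])]
def K8pairsL : List (Fin 8 × Fin 8) := [(0,1),(0,2),(1,2),(0,3),(1,3),(2,3),(0,4),(1,4),(2,4),(3,4),(0,5),(1,5),(2,5),(3,5),(4,5),(0,6),(1,6),(2,6),(3,6),(4,6),(5,6),(0,7),(1,7),(2,7),(3,7),(4,7),(5,7),(6,7)]
def K8monoV (n h : Nat) (w : W8) : Nat :=
  (K8EMH n h w.2.1 &&& K8EMH n h w.2.2.1 &&& K8EMH n h w.2.2.2) |||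
  (K8EMHc n h w.2.1 &&& K8EMHc n h w.2.2.1 &&& K8EMHc n h w.2.2.2)

def K8res (n h : Nat) : Nat :=
  K8pairs.foldr (fun q acc =>
    (K8monoV n h q.1 &&& q.2.foldr (fun u a2 => K8monoV n h u ||| a2) 0) ||| acc) 0

def K8monoB (e : Nat) (w : W8) : Bool :=
  (e.testBit w.2.1 && e.testBit w.2.2.1 && e.testBit w.2.2.2) ||
  (!e.testBit w.2.1 && !e.testBit w.2.2.1 && !e.testBit w.2.2.2)

def K8check (e : Nat) : Bool :=
  K8pairs.foldr (fun q acc =>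
    (K8monoB e q.1 && q.2.foldr (fun u a2 => K8monoB e u || a2) false) || acc) false

theorem K8r0 : K8res 24 0 = K8S 24 - 1 := by decide +kernel
theorem K8r1 : K8res 24 1 = K8S 24 - 1 := by decide +kernel
theorem K8r2 : K8res 24 2 = K8S 24 - 1 := by decide +kernel
theorem K8r3 : K8res 24 3 = K8S 24 - 1 := by decide +kernel
theorem K8r4 : K8res 24 4 = K8S 24 - 1 := by decide +kernel
theorem K8r5 : K8res 24 5 = K8S 24 - 1 := by decide +kernel
theorem K8r6 : K8res 24 6 = K8S 24 - 1 := by decide +kernel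
theorem K8r7 : K8res 24 7 = K8S 24 - 1 := by decide +kernel

theorem K8S_eq (n : Nat) : K8S n = 2^(2^n) := by
  simp [K8S, Nat.shiftLeft_eq]

theorem K8EM_lt : ∀ n i, K8EM n i < K8S n
  | 0, _ => by simp [K8EM, K8S]
  | n+1, i => by
    have hpos : 0 < (2:ℕ)^(2^n) := Nat.two_pow_pos _
    have h2 : K8S (n+1) = 2^(2^n) * 2^(2^n) := by
      rw [K8S_eq, ← Nat.pow_add]; congr 1; rw [Nat.pow_succ]; omega
    have ih := K8EM_lt n i
    rw [K8S_eq] at ih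
    rw [K8EM, h2]
    split
    · rw [Nat.shiftLeft_eq, K8S_eq]
      exact Nat.mul_lt_mul_of_lt_of_le (by omega) le_rfl hpos
    · have h3 : (2:ℕ)^(2^n) * 2^(2^n) = 2^(2^n + 2^n) := by rw [Nat.pow_add]
      rw [h3]
      apply Nat.or_lt_two_pow
      · have hle : (2:ℕ)^(2^n) ≤ 2^(2^n + 2^n) :=
          Nat.pow_le_pow_right (by norm_num) (Nat.le_add_right _ _)
        exact lt_of_lt_of_le ih hle
      · rw [Nat.shiftLeft_eq, Nat.pow_add]
        exact Nat.mul_lt_mul_of_lt_of_le ih le_rfl hpos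

theorem K8top_testBit (n e : Nat) (he : e < 2^(n+1)) :
    ((K8S n - 1) <<< (2^n)).testBit e = e.testBit n := by
  simp only [Nat.testBit_shiftLeft, K8S_eq, Nat.testBit_two_pow_sub_one]
  rw [Nat.testBit_eq_decide_div_mod_eq]
  have hpow : (2:ℕ)^(n+1) = 2^n + 2^n := by rw [Nat.pow_succ]; omega
  rcases Nat.lt_or_ge e (2^n) with h | h
  · rw [Nat.div_eq_of_lt h]
    simp [Nat.not_le.mpr h]
  · have hd : e / 2^n = 1 := Nat.div_eq_of_lt_le (by omega) (by omega)
    have h2 : e - 2^n < 2^n := by omega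
    rw [hd]
    simp [h, h2]

theorem K8EM_testBit : ∀ n i e, i < n → e < 2^n → (K8EM n i).testBit e = e.testBit i := by
  intro n
  induction n with
  | zero => omega
  | succ n ih =>
    intro i e hi he
    rw [K8EM]
    by_cases hin : i = n
    · rw [if_pos hin, hin]
      exact K8top_testBit n e he
    · have hi' : i < n := by omega
      have hpow : (2:ℕ)^(n+1) = 2^n + 2^n := by rw [Nat.pow_succ]; omega
      rw [if_neg hin]
      simp only [Nat.testBit_or, Nat.testBit_shiftLeft]
      rcases Nat.lt_or_ge e (2^n) with h | h
      · rw [ih i e hi' h]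
        simp [Nat.not_le.mpr h]
      · obtain ⟨x, rfl⟩ : ∃ x, e = 2^n + x := ⟨e - 2^n, by omega⟩
        have hx : x < 2^n := by omega
        have h1 : (K8EM n i).testBit (2^n + x) = false := by
          apply Nat.testBit_lt_two_pow
          calc K8EM n i < K8S n := K8EM_lt n i
            _ = 2^(2^n) := K8S_eq n
            _ ≤ 2^(2^n + x) := Nat.pow_le_pow_right (by norm_num) (by omega)
        rw [h1, Nat.add_sub_cancel_left, ih i x hi' hx,
          Nat.testBit_two_pow_add_gt hi']
        simp [h]

theorem K8EMH_testBit (n h i l : Nat) (hl : l < 2^n) :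
    (K8EMH n h i).testBit l = (2^n * h + l).testBit i := by
  rw [Nat.testBit_two_pow_mul_add h hl i, K8EMH]
  by_cases hin : i < n
  · rw [if_pos hin, if_pos hin, K8EM_testBit n i l hin hl]
  · rw [if_neg hin, if_neg hin]
    cases hb : h.testBit (i - n) with
    | true => simp [K8S_eq, hl]
    | false => simp

theorem K8EMHc_testBit (n h i l : Nat) (hl : l < 2^n) :
    (K8EMHc n h i).testBit l = !(2^n * h + l).testBit i := by
  rw [K8EMHc, Nat.testBit_xor, K8EMH_testBit n h i l hl, K8S_eq,
    Nat.testBit_two_pow_sub_one, decide_eq_true hl, Bool.true_xor]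

theorem K8monoV_testBit (n h : Nat) (w : W8) (l : Nat) (hl : l < 2^n) :
    (K8monoV n h w).testBit l = K8monoB (2^n * h + l) w := by
  simp only [K8monoV, K8monoB, Nat.testBit_or, Nat.testBit_and,
    K8EMH_testBit n h _ l hl, K8EMHc_testBit n h _ l hl]

theorem K8res_testBit (n h l : Nat) (hl : l < 2^n) :
    (K8res n h).testBit l = K8check (2^n * h + l) := by
  rw [K8res, K8check]
  induction K8pairs with
  | nil => simp
  | cons q L ihL =>
    simp only [List.foldr_cons, Nat.testBit_or, Nat.testBit_and, ihL,
      K8monoV_testBit n h _ l hl]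
    congr 2
    induction q.2 with
    | nil => simp
    | cons u L2 ih2 =>
      simp only [List.foldr_cons, Nat.testBit_or, ih2, K8monoV_testBit n h _ l hl]

def K8ofBools : List Bool → Nat
  | [] => 0
  | b :: bs => (cond b 1 0) + 2 * K8ofBools bs

def K8encode (χ : Fin 8 → Fin 8 → Bool) : Nat :=
  K8ofBools (K8pairsL.map fun p => χ p.1 p.2)

theorem K8ofBools_lt : ∀ bs, K8ofBools bs < 2^bs.length
  | [] => by simp [K8ofBools]
  | b :: bs => by
    have ih := K8ofBools_lt bs
    have hc : (cond b 1 0 : Nat) ≤ 1 := by cases b <;> simp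
    simp only [K8ofBools, List.length_cons, Nat.pow_succ]
    omega

theorem K8ofBools_testBit : ∀ bs (i : Nat), (K8ofBools bs).testBit i = bs.getD i false
  | [], i => by simp [K8ofBools]
  | b :: bs, 0 => by
    rw [K8ofBools, Nat.testBit_zero]
    cases b <;> simp <;> omega
  | b :: bs, i+1 => by
    rw [K8ofBools, Nat.testBit_add_one]
    have hd : (cond b 1 0 + 2 * K8ofBools bs) / 2 = K8ofBools bs := by
      cases b <;> simp <;> omega
    rw [hd]
    simpa using K8ofBools_testBit bs i

theorem K8encode_lt (χ : Fin 8 → Fin 8 → Bool) : K8encode χ < 2^28 := by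
  have h := K8ofBools_lt (K8pairsL.map fun p => χ p.1 p.2)
  have hl : (K8pairsL.map fun p => χ p.1 p.2).length = 28 := by
    rw [List.length_map]; rfl
  rw [hl] at h
  exact h

theorem K8encode_spec (χ : Fin 8 → Fin 8 → Bool) (hsym : ∀ a b, χ a b = χ b a)
    (a b : Fin 8) (hab : a ≠ b) : (K8encode χ).testBit (K8eidx a b) = χ a b := by
  rw [K8encode, K8ofBools_testBit]
  fin_cases a <;> fin_cases b <;>
    first
      | exact absurd rfl hab
      | (simp [K8pairsL, K8eidx]; try exact hsym _ _)

abbrev K8good (w : W8) : Prop :=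
  w.1.1 ≠ w.1.2.1 ∧ w.1.1 ≠ w.1.2.2 ∧ w.1.2.1 ≠ w.1.2.2 ∧
  w.2.1 = K8eidx w.1.1 w.1.2.1 ∧ w.2.2.1 = K8eidx w.1.1 w.1.2.2 ∧
  w.2.2.2 = K8eidx w.1.2.1 w.1.2.2

abbrev K8disj (w1 w2 : W8) : Prop :=
  w1.1.1 ≠ w2.1.1 ∧ w1.1.1 ≠ w2.1.2.1 ∧ w1.1.1 ≠ w2.1.2.2 ∧
  w1.1.2.1 ≠ w2.1.1 ∧ w1.1.2.1 ≠ w2.1.2.1 ∧ w1.1.2.1 ≠ w2.1.2.2 ∧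
  w1.1.2.2 ≠ w2.1.1 ∧ w1.1.2.2 ≠ w2.1.2.1 ∧ w1.1.2.2 ≠ w2.1.2.2

theorem K8pairs_good : ∀ q ∈ K8pairs, K8good q.1 ∧ ∀ u ∈ q.2, K8good u ∧ K8disj q.1 u := by
  decide

theorem K8mono_tri (χ : Fin 8 → Fin 8 → Bool) (hsym : ∀ a b, χ a b = χ b a) (w : W8)
    (hg : K8good w) (hm : K8monoB (K8encode χ) w = true) :
    IsMonoTri χ {w.1.1, w.1.2.1, w.1.2.2} := by
  obtain ⟨h1, h2, h3, he1, he2, he3⟩ := hg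
  rw [K8monoB, he1, he2, he3, K8encode_spec χ hsym _ _ h1, K8encode_spec χ hsym _ _ h2,
    K8encode_spec χ hsym _ _ h3] at hm
  constructor
  · rw [Finset.card_insert_of_notMem (by simp [h1, h2]),
      Finset.card_insert_of_notMem (by simp [h3]), Finset.card_singleton]
  · simp only [Bool.or_eq_true] at hm
    rcases hm with h | h
    · simp only [Bool.and_eq_true] at h
      obtain ⟨⟨hab, hac⟩, hbc⟩ := h
      refine ⟨true, ?_⟩
      intro x hx y hy hxy
      simp only [Finset.mem_insert, Finset.mem_singleton] at hx hy
      rcases hx with rfl | rfl | rfl <;> rcases hy with rfl | rfl | rfl <;>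
        first
          | exact absurd rfl hxy
          | assumption
          | (rw [hsym]; assumption)
    · simp only [Bool.and_eq_true, Bool.not_eq_true'] at h
      obtain ⟨⟨hab, hac⟩, hbc⟩ := h
      refine ⟨false, ?_⟩
      intro x hx y hy hxy
      simp only [Finset.mem_insert, Finset.mem_singleton] at hx hy
      rcases hx with rfl | rfl | rfl <;> rcases hy with rfl | rfl | rfl <;>
        first
          | exact absurd rfl hxy
          | assumption
          | (rw [hsym]; assumption)

theorem K8disj_finset (w1 w2 : W8) (hd : K8disj w1 w2) :
    Disjoint ({w1.1.1, w1.1.2.1, w1.1.2.2} : Finset (Fin 8))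
      {w2.1.1, w2.1.2.1, w2.1.2.2} := by
  obtain ⟨d1, d2, d3, d4, d5, d6, d7, d8, d9⟩ := hd
  rw [Finset.disjoint_left]
  intro x hx hy
  simp only [Finset.mem_insert, Finset.mem_singleton] at hx hy
  rcases hx with rfl | rfl | rfl <;> rcases hy with h | h | h <;> simp_all

theorem K8foldr_or {α : Type} (f : α → Bool) :
    ∀ L : List α, L.foldr (fun a acc => f a || acc) false = true → ∃ a ∈ L, f a = true
  | [], h => by simp at h
  | a :: L, h => by
    simp only [List.foldr_cons, Bool.or_eq_true] at h
    rcases h with h | h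
    · exact ⟨a, by simp, h⟩
    · obtain ⟨b, hb, hfb⟩ := K8foldr_or f L h
      exact ⟨b, by simp [hb], hfb⟩

theorem K8check_extract (e : Nat) (h : K8check e = true) :
    ∃ q ∈ K8pairs, K8monoB e q.1 = true ∧ ∃ u ∈ q.2, K8monoB e u = true := by
  rw [K8check] at h
  obtain ⟨q, hq, hfq⟩ := K8foldr_or _ _ h
  simp only [Bool.and_eq_true] at hfq
  obtain ⟨h1, h2⟩ := hfq
  obtain ⟨u, hu, hfu⟩ := K8foldr_or _ _ h2
  exact ⟨q, hq, h1, u, hu, hfu⟩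

theorem K8all (h : Nat) (hh : h < 8) : K8res 24 h = K8S 24 - 1 := by
  interval_cases h
  exacts [K8r0, K8r1, K8r2, K8r3, K8r4, K8r5, K8r6, K8r7]

theorem K8main (χ : Fin 8 → Fin 8 → Bool) (hsym : ∀ a b, χ a b = χ b a)
    (h67 : χ 6 7 = false) :
    ∃ t₁ t₂ : Finset (Fin 8), Disjoint t₁ t₂ ∧ IsMonoTri χ t₁ ∧ IsMonoTri χ t₂ := by
  have he28 : K8encode χ < 2^28 := K8encode_lt χ
  have hb27 : (K8encode χ).testBit 27 = false := by
    have h := K8encode_spec χ hsym 6 7 (by decide)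
    have he : K8eidx 6 7 = 27 := by decide
    rw [he] at h
    rw [h, h67]
  have hp24 : (2:ℕ)^24 = 16777216 := by norm_num
  have hp27 : (2:ℕ)^27 = 134217728 := by norm_num
  have hp28 : (2:ℕ)^28 = 268435456 := by norm_num
  have he27 : K8encode χ < 2^27 := by
    rw [Nat.testBit_eq_decide_div_mod_eq, decide_eq_false_iff_not, hp27] at hb27
    rw [hp27]
    rw [hp28] at he28
    omega
  have hl : K8encode χ % 2^24 < 2^24 := Nat.mod_lt _ (by norm_num)
  have hh : K8encode χ / 2^24 < 8 := by
    rw [hp27] at he27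
    rw [hp24]
    omega
  have hres := K8all (K8encode χ / 2^24) hh
  have hcheck : K8check (K8encode χ) = true := by
    have ht := K8res_testBit 24 (K8encode χ / 2^24) (K8encode χ % 2^24) hl
    rw [Nat.div_add_mod] at ht
    rw [← ht, hres, K8S_eq, Nat.testBit_two_pow_sub_one]
    exact decide_eq_true hl
  obtain ⟨q, hq, hmq, u, hu, hmu⟩ := K8check_extract _ hcheck
  obtain ⟨hgq, hrest⟩ := K8pairs_good q hq
  obtain ⟨hgu, hdisj⟩ := hrest u hu
  exact ⟨_, _, K8disj_finset q.1 u hdisj, K8mono_tri χ hsym q.1 hgq hmq,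
    K8mono_tri χ hsym u hgu hmu⟩

/-- Every 2-edge-colouring of `K_8` contains two vertex-disjoint monochromatic triangles. -/
theorem two_disjoint_mono_triangles_K8 (χ : Fin 8 → Fin 8 → Bool)
    (hsym : ∀ a b, χ a b = χ b a) :
    ∃ t₁ t₂ : Finset (Fin 8), Disjoint t₁ t₂ ∧ IsMonoTri χ t₁ ∧ IsMonoTri χ t₂ := by
  cases h67 : χ 6 7 with
  | false => exact K8main χ hsym h67
  | true =>
    have conv : ∀ t, IsMonoTri (fun a b => !(χ a b)) t → IsMonoTri χ t := by
      rintro t ⟨hc, c, hcol⟩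
      refine ⟨hc, !c, fun x hx y hy hxy => ?_⟩
      have h := hcol x hx y hy hxy
      simp only at h
      cases hcxy : χ x y <;> simp_all
    obtain ⟨t1, t2, hd, hm1, hm2⟩ :=
      K8main (fun a b => !(χ a b)) (fun a b => congrArg Bool.not (hsym a b)) (by simp [h67])
    exact ⟨t1, t2, hd, conv _ hm1, conv _ hm2⟩
end

section
/- Every 2-edge-colouring of the complete graph K_7 contains two monochromatic triangles sharing at most one vertex. -/
set_option linter.unreachableTactic false
set_option linter.unusedTactic false
set_option linter.unnecessarySeqFocus false


def bitAt (m k : ℕ) : Bool := decide ((m / 2^k) % 2 = 1)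
def eidx (i j : ℕ) : ℕ := if i < j then j*(j-1)/2 + i else i*(i-1)/2 + j
def ψB (m : ℕ) {n : ℕ} (i j : Fin n) : Bool := bitAt m (eidx i.1 j.1)

def bitsToNat : List Bool → ℕ
  | [] => 0
  | b :: L => b.toNat + 2 * bitsToNat L

lemma bitsToNat_lt (L : List Bool) : bitsToNat L < 2 ^ L.length := by
  induction L with
  | nil => simp [bitsToNat]
  | cons b L ih =>
    have hb : b.toNat ≤ 1 := Bool.toNat_le b
    simp only [bitsToNat, List.length_cons, pow_succ]
    omega

lemma bitAt_bitsToNat (L : List Bool) (k : ℕ) :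
    bitAt (bitsToNat L) k = L.getD k false := by
  induction L generalizing k with
  | nil => simp [bitAt, bitsToNat, Nat.zero_div]
  | cons b L ih =>
    cases k with
    | zero =>
      simp only [bitAt, pow_zero, Nat.div_one, List.getD]
      cases b <;> simp [bitsToNat] <;> omega
    | succ k =>
      have h2 : (b.toNat + 2 * bitsToNat L) / 2 ^ (k+1) = bitsToNat L / 2 ^ k := by
        rw [pow_succ, mul_comm (2^k) 2, ← Nat.div_div_eq_div_mul]
        congr 1
        cases b <;> simp [Bool.toNat] <;> omega
      simp only [bitAt, bitsToNat, List.getD_cons_succ]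
      simp only [h2]
      simpa [bitAt] using ih k

lemma eidx_comm (a b : ℕ) : eidx a b = eidx b a := by
  rcases Nat.lt_trichotomy a b with h|rfl|h
  · simp [eidx, h, Nat.lt_asymm h]
  · rfl
  · simp [eidx, h, Nat.lt_asymm h]

def pairs5 : List (Fin 5 × Fin 5) :=
  [(0,1),(0,2),(1,2),(0,3),(1,3),(2,3),(0,4),(1,4),(2,4),(3,4)]

lemma pairs5_spec : ∀ i j : Fin 5, i < j → pairs5[eidx i.1 j.1]? = some (i,j) := by decide

lemma encode5 (ψ : Fin 5 → Fin 5 → Bool) (hsym : ∀ i j, ψ i j = ψ j i) :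
    ∃ m : ℕ, m < 1024 ∧ ∀ i j : Fin 5, i ≠ j → ψB m i j = ψ i j := by
  refine ⟨bitsToNat (pairs5.map fun p => ψ p.1 p.2), ?_, ?_⟩
  · have := bitsToNat_lt (pairs5.map fun p => ψ p.1 p.2)
    simpa [pairs5] using this
  · have key : ∀ i j : Fin 5, i < j →
        ψB (bitsToNat (pairs5.map fun p => ψ p.1 p.2)) i j = ψ i j := by
      intro i j hij
      have hsome := pairs5_spec i j hij
      unfold ψB
      rw [bitAt_bitsToNat, List.getD_eq_getElem?_getD, List.getElem?_map, hsome]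
      rfl
    intro i j hij
    rcases lt_or_gt_of_ne hij with h | h
    · exact key i j h
    · have : ψB (bitsToNat (pairs5.map fun p => ψ p.1 p.2)) i j
          = ψB (bitsToNat (pairs5.map fun p => ψ p.1 p.2)) j i := by
        unfold ψB; rw [eidx_comm]
      rw [this, key j i h, hsym]

set_option maxRecDepth 100000 in
lemma L2dec : ∀ m : Fin 1024, ∀ c : Bool,
    (∀ i j k : Fin 5, i ≠ j → i ≠ k → j ≠ k →
      ¬(ψB m.1 i j = ψB m.1 i k ∧ ψB m.1 i j = ψB m.1 j k)) →
    ((∀ i : Fin 5, i ≠ 0 → (ψB m.1 (0 : Fin 5) i = c ↔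
        (Finset.univ.filter fun j => j ≠ 0 ∧ j ≠ i ∧ ψB m.1 i j = c).card = 1)) ∧
      (Finset.univ.filter fun i => i ≠ 0 ∧ ψB m.1 (0 : Fin 5) i = c).card = 2) := by decide

lemma K5main (ψ : Fin 5 → Fin 5 → Bool) (hsym : ∀ i j, ψ i j = ψ j i)
    (htf : ∀ i j k : Fin 5, i ≠ j → i ≠ k → j ≠ k →
      ¬(ψ i j = ψ i k ∧ ψ i j = ψ j k)) (c : Bool) :
    (∀ i : Fin 5, i ≠ 0 → (ψ 0 i = c ↔
        (Finset.univ.filter fun j => j ≠ 0 ∧ j ≠ i ∧ ψ i j = c).card = 1)) ∧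
      (Finset.univ.filter fun i => i ≠ 0 ∧ ψ 0 i = c).card = 2 := by
  obtain ⟨m, hm, hag⟩ := encode5 ψ hsym
  have htf' : ∀ i j k : Fin 5, i ≠ j → i ≠ k → j ≠ k →
      ¬(ψB m i j = ψB m i k ∧ ψB m i j = ψB m j k) := by
    intro i j k h1 h2 h3 hc
    exact htf i j k h1 h2 h3
      ⟨by rw [← hag i j h1, ← hag i k h2]; exact hc.1,
       by rw [← hag i j h1, ← hag j k h3]; exact hc.2⟩
  have hd := L2dec ⟨m, hm⟩ c htf'
  have hfilt1 : ∀ i : Fin 5, i ≠ 0 →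
      (Finset.univ.filter fun j => j ≠ 0 ∧ j ≠ i ∧ ψB m i j = c)
        = (Finset.univ.filter fun j => j ≠ 0 ∧ j ≠ i ∧ ψ i j = c) := by
    intro i hi
    apply Finset.filter_congr
    intro j _
    by_cases hji : j = i
    · simp [hji]
    · rw [hag i j (Ne.symm hji)]
  have hfilt2 : (Finset.univ.filter fun i => i ≠ 0 ∧ ψB m (0 : Fin 5) i = c)
      = (Finset.univ.filter fun i => i ≠ 0 ∧ ψ 0 i = c) := by
    apply Finset.filter_congr
    intro i _
    by_cases hi : i = 0
    · simp [hi]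
    · rw [hag 0 i (Ne.symm hi)]
  refine ⟨?_, by rw [← hfilt2]; exact hd.2⟩
  intro i hi
  rw [← hag 0 i (Ne.symm hi), ← hfilt1 i hi]
  exact hd.1 i hi

lemma mkTri {n : ℕ} (χ : Fin n → Fin n → Bool) (hsym : ∀ a b, χ a b = χ b a)
    {a b c : Fin n} {col : Bool} (hab : a ≠ b) (hac : a ≠ c) (hbc : b ≠ c)
    (h1 : χ a b = col) (h2 : χ a c = col) (h3 : χ b c = col) :
    IsMonoTri χ {a, b, c} := by
  have h1' : χ b a = col := (hsym b a).trans h1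
  have h2' : χ c a = col := (hsym c a).trans h2
  have h3' : χ c b = col := (hsym c b).trans h3
  refine ⟨?_, col, ?_⟩
  · rw [Finset.card_insert_of_notMem (by simp [hab, hac]),
      Finset.card_insert_of_notMem (by simp [hbc]), Finset.card_singleton]
  · intro x hx y hy hxy
    simp only [Finset.mem_insert, Finset.mem_singleton] at hx hy
    rcases hx with rfl | rfl | rfl <;> rcases hy with rfl | rfl | rfl <;>
      first
        | exact absurd rfl hxy
        | assumption

lemma pig : ∀ f : Fin 5 → Bool, ∃ i j k : Fin 5, i ≠ j ∧ i ≠ k ∧ j ≠ k ∧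
    f i = f j ∧ f i = f k := by decide

lemma ramsey7 (χ : Fin 7 → Fin 7 → Bool) :
    ∃ a b c : Fin 7, a ≠ b ∧ a ≠ c ∧ b ≠ c ∧ χ a b = χ a c ∧ χ a b = χ b c := by
  set v : Fin 5 → Fin 7 := fun i => ⟨i.1 + 1, by omega⟩ with hv
  have hvinj : Function.Injective v := by
    intro i j h
    have := congrArg Fin.val h
    simp only [hv] at this
    exact Fin.ext (by omega)
  have hv0 : ∀ i, (0 : Fin 7) ≠ v i := by
    intro i h
    have := congrArg Fin.val h
    simp [hv] at this
  obtain ⟨i, j, k, hij, hik, hjk, e1, e2⟩ := pig (fun i => χ 0 (v i))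

  have hflip : ∀ b : Bool, b ≠ χ 0 (v i) → b = !(χ 0 (v i)) := by
    intro b hb
    revert hb; cases b <;> cases (χ 0 (v i)) <;> simp
  by_cases hxy : χ (v i) (v j) = χ 0 (v i)
  · exact ⟨0, v i, v j, hv0 i, hv0 j, fun h => hij (hvinj h), e1, hxy.symm⟩
  by_cases hxz : χ (v i) (v k) = χ 0 (v i)
  · exact ⟨0, v i, v k, hv0 i, hv0 k, fun h => hik (hvinj h), e2, hxz.symm⟩
  by_cases hyz : χ (v j) (v k) = χ 0 (v i)
  · exact ⟨0, v j, v k, hv0 j, hv0 k, fun h => hjk (hvinj h),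
      e1.symm.trans e2, e1.symm.trans hyz.symm⟩
  · exact ⟨v i, v j, v k, fun h => hij (hvinj h), fun h => hik (hvinj h),
      fun h => hjk (hvinj h),
      (hflip _ hxy).trans (hflip _ hxz).symm, (hflip _ hxy).trans (hflip _ hyz).symm⟩

noncomputable def Evert (S : Finset (Fin 7)) (h : S.card = 4) (x : Fin 7) :
    Fin 5 → Fin 7 :=
  Fin.cases x (fun j => (S.orderIsoOfFin h j : Fin 7))

lemma Evert_zero (S : Finset (Fin 7)) (h : S.card = 4) (x : Fin 7) :
    Evert S h x 0 = x := rfl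

lemma Evert_succ (S : Finset (Fin 7)) (h : S.card = 4) (x : Fin 7) (j : Fin 4) :
    Evert S h x j.succ = (S.orderIsoOfFin h j : Fin 7) := rfl

/-- Every 2-edge-colouring of `K_7` contains two monochromatic triangles
sharing at most one vertex. -/
theorem two_mono_triangles_K7_sharing_at_most_one (χ : Fin 7 → Fin 7 → Bool)
    (hsym : ∀ a b, χ a b = χ b a) :
    ∃ t₁ t₂ : Finset (Fin 7), t₁ ≠ t₂ ∧ (t₁ ∩ t₂).card ≤ 1 ∧
      IsMonoTri χ t₁ ∧ IsMonoTri χ t₂ := by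
  obtain ⟨a, b, c, hab, hac, hbc, e1, e2⟩ := ramsey7 χ
  set c0 := χ a b with hc0
  have hT : IsMonoTri χ {a, b, c} :=
    mkTri χ hsym hab hac hbc hc0.symm (e1.symm.trans hc0.symm) (e2.symm.trans hc0.symm)
  set t₁ : Finset (Fin 7) := {a, b, c} with ht1def
  by_cases h : ∃ t₂, IsMonoTri χ t₂ ∧ (t₁ ∩ t₂).card ≤ 1
  · obtain ⟨t₂, hm2, hcard⟩ := h
    refine ⟨t₁, t₂, ?_, hcard, hT, hm2⟩
    rintro rfl
    rw [Finset.inter_self, hT.1] at hcard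
    omega
  push_neg at h
  set S : Finset (Fin 7) := Finset.univ \ t₁ with hSdef
  have hScard : S.card = 4 := by
    rw [hSdef, Finset.card_sdiff_of_subset (Finset.subset_univ _), hT.1, Finset.card_univ,
      Fintype.card_fin]
  set E : Fin 7 → Fin 5 → Fin 7 := fun x => Evert S hScard x with hEdef
  have hE0 : ∀ x, E x 0 = x := fun x => rfl
  have hES : ∀ x (i : Fin 5), i ≠ 0 → E x i ∈ S := by
    intro x i hi
    obtain ⟨j, rfl⟩ := Fin.eq_succ_of_ne_zero hi
    simp only [hEdef]
    rw [Evert_succ]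
    exact (S.orderIsoOfFin hScard j).2
  have hSnotT : ∀ y, y ∈ S → y ∉ t₁ := fun y hy => (Finset.mem_sdiff.mp hy).2
  have hTnotS : ∀ y, y ∈ t₁ → y ∉ S := fun y hy hyS => hSnotT y hyS hy
  have hEqxy : ∀ x y (i : Fin 5), i ≠ 0 → E x i = E y i := by
    intro x y i hi
    obtain ⟨j, rfl⟩ := Fin.eq_succ_of_ne_zero hi
    simp only [hEdef, Evert_succ]
  have hEinj : ∀ x, x ∈ t₁ → Function.Injective (E x) := by
    intro x hx i j hij
    by_cases hi : i = 0 <;> by_cases hj : j = 0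
    · rw [hi, hj]
    · exfalso; subst hi; rw [hE0] at hij
      exact hTnotS x hx (by rw [hij]; exact hES x j hj)
    · exfalso; subst hj; rw [hE0] at hij
      exact hTnotS x hx (by rw [← hij]; exact hES x i hi)
    · obtain ⟨i', rfl⟩ := Fin.eq_succ_of_ne_zero hi
      obtain ⟨j', rfl⟩ := Fin.eq_succ_of_ne_zero hj
      simp only [hEdef, Evert_succ] at hij
      exact congrArg Fin.succ ((S.orderIsoOfFin hScard).injective
        (Subtype.coe_injective hij))
  have hEinT : ∀ x, x ∈ t₁ → ∀ i : Fin 5, E x i ∈ t₁ → E x i = x := by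
    intro x hx i hmem
    by_cases hi : i = 0
    · rw [hi, hE0]
    · exact absurd hmem (hSnotT _ (hES x i hi))
  have htfx : ∀ x, x ∈ t₁ → ∀ i j k : Fin 5, i ≠ j → i ≠ k → j ≠ k →
      ¬(χ (E x i) (E x j) = χ (E x i) (E x k) ∧
        χ (E x i) (E x j) = χ (E x j) (E x k)) := by
    intro x hx i j k h1 h2 h3 hcc
    have n1 : E x i ≠ E x j := fun hh => h1 (hEinj x hx hh)
    have n2 : E x i ≠ E x k := fun hh => h2 (hEinj x hx hh)
    have n3 : E x j ≠ E x k := fun hh => h3 (hEinj x hx hh)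
    have hmono : IsMonoTri χ {E x i, E x j, E x k} :=
      mkTri χ hsym n1 n2 n3 rfl hcc.1.symm hcc.2.symm
    have hint : (t₁ ∩ {E x i, E x j, E x k}).card ≤ 1 := by
      have hsub2 : t₁ ∩ {E x i, E x j, E x k} ⊆ {x} := by
        intro y hy
        have hy1 := (Finset.mem_inter.mp hy).1
        have hy2 := (Finset.mem_inter.mp hy).2
        simp only [Finset.mem_insert, Finset.mem_singleton] at hy2 ⊢
        rcases hy2 with rfl | rfl | rfl
        · exact hEinT x hx i hy1
        · exact hEinT x hx j hy1
        · exact hEinT x hx k hy1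
      exact le_trans (Finset.card_le_card hsub2) (by simp)
    have := h _ hmono
    omega
  have haT : a ∈ t₁ := by simp [ht1def]
  have hbT : b ∈ t₁ := by simp [ht1def]
  have hcT : c ∈ t₁ := by simp [ht1def]
  have hKa := K5main (fun i j => χ (E a i) (E a j)) (fun i j => hsym _ _)
    (htfx a haT) c0
  have hKb := K5main (fun i j => χ (E b i) (E b j)) (fun i j => hsym _ _)
    (htfx b hbT) c0
  have hKc := K5main (fun i j => χ (E c i) (E c j)) (fun i j => hsym _ _)
    (htfx c hcT) c0
  obtain ⟨i₁, i₂, hi12, hset⟩ := Finset.card_eq_two.mp hKa.2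
  have m1 : i₁ ≠ 0 ∧ χ (E a 0) (E a i₁) = c0 := by
    have hmem : i₁ ∈ Finset.univ.filter
        fun i => i ≠ 0 ∧ χ (E a 0) (E a i) = c0 := by
      rw [hset]; exact Finset.mem_insert_self _ _
    exact (Finset.mem_filter.mp hmem).2
  have m2 : i₂ ≠ 0 ∧ χ (E a 0) (E a i₂) = c0 := by
    have hmem : i₂ ∈ Finset.univ.filter
        fun i => i ≠ 0 ∧ χ (E a 0) (E a i) = c0 := by
      rw [hset]
      exact Finset.mem_insert_of_mem (Finset.mem_singleton_self _)
    exact (Finset.mem_filter.mp hmem).2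
  have hpq : E a i₁ ≠ E a i₂ := fun hh => hi12 (hEinj a haT hh)
  have hpS : E a i₁ ∈ S := hES a i₁ m1.1
  have hqS : E a i₂ ∈ S := hES a i₂ m2.1
  have hap : χ a (E a i₁) = c0 := by
    have := m1.2; rw [hE0 a] at this; exact this
  have haq : χ a (E a i₂) = c0 := by
    have := m2.2; rw [hE0 a] at this; exact this
  have hfilt_xy : ∀ x y, ∀ i : Fin 5, i ≠ 0 →
      (Finset.univ.filter fun j => j ≠ 0 ∧ j ≠ i ∧ χ (E x i) (E x j) = c0)
        = (Finset.univ.filter fun j => j ≠ 0 ∧ j ≠ i ∧ χ (E y i) (E y j) = c0) := by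
    intro x y i hi
    apply Finset.filter_congr
    intro j _
    by_cases hj : j = 0
    · simp [hj]
    · rw [hEqxy x y i hi, hEqxy x y j hj]
  have d1 := (hKa.1 i₁ m1.1).mp m1.2
  have d2 := (hKa.1 i₂ m2.1).mp m2.2
  have hbp : χ b (E a i₁) = c0 := by
    have hh := (hKb.1 i₁ m1.1).mpr (by rw [hfilt_xy b a i₁ m1.1]; exact d1)
    rw [hE0 b, hEqxy b a i₁ m1.1] at hh
    exact hh
  have hcq : χ c (E a i₂) = c0 := by
    have hh := (hKc.1 i₂ m2.1).mpr (by rw [hfilt_xy c a i₂ m2.1]; exact d2)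
    rw [hE0 c, hEqxy c a i₂ m2.1] at hh
    exact hh
  have hpa : E a i₁ ≠ a := fun hh => hTnotS a haT (hh ▸ hpS)
  have hpb : E a i₁ ≠ b := fun hh => hTnotS b hbT (hh ▸ hpS)
  have hpc : E a i₁ ≠ c := fun hh => hTnotS c hcT (hh ▸ hpS)
  have hqa : E a i₂ ≠ a := fun hh => hTnotS a haT (hh ▸ hqS)
  have hqb : E a i₂ ≠ b := fun hh => hTnotS b hbT (hh ▸ hqS)
  have hqc : E a i₂ ≠ c := fun hh => hTnotS c hcT (hh ▸ hqS)
  have mono2 : IsMonoTri χ {a, b, E a i₁} :=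
    mkTri χ hsym hab (Ne.symm hpa) (Ne.symm hpb) hc0.symm hap hbp
  have mono3 : IsMonoTri χ {a, c, E a i₂} :=
    mkTri χ hsym hac (Ne.symm hqa) (Ne.symm hqc) (e1.symm.trans hc0.symm) haq hcq
  refine ⟨{a, b, E a i₁}, {a, c, E a i₂}, ?_, ?_, mono2, mono3⟩
  · intro heq
    have hbmem : b ∈ ({a, c, E a i₂} : Finset (Fin 7)) := by
      rw [← heq]; simp
    simp only [Finset.mem_insert, Finset.mem_singleton] at hbmem
    rcases hbmem with h' | h' | h'
    · exact (Ne.symm hab) h'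
    · exact hbc h'
    · exact (Ne.symm hqb) h'
  · have hss : ({a, b, E a i₁} ∩ {a, c, E a i₂} : Finset (Fin 7)) ⊆ {a} := by
      intro y hy
      obtain ⟨hy1, hy2⟩ := Finset.mem_inter.mp hy
      simp only [Finset.mem_insert, Finset.mem_singleton] at hy1 hy2 ⊢
      rcases hy1 with rfl | rfl | rfl
      · rfl
      · rcases hy2 with h' | h' | h'
        · exact absurd h' (Ne.symm hab)
        · exact absurd h' hbc
        · exact absurd h' (Ne.symm hqb)
      · rcases hy2 with h' | h' | h'
        · exact absurd h' hpa
        · exact absurd h' hpc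
        · exact absurd h' hpq
    exact le_trans (Finset.card_le_card hss) (by simp)
end

section
/- Suppose a 2-edge-coloured K_6 contains two vertex-disjoint monochromatic triangles of different colours. Then for every vertex v of K_6, there exists a bowtie containing v, i.e., a red triangle and a blue triangle sharing exactly one vertex, one of which contains v. -/
/-- A monochromatic triangle of colour `c` in a 2-edge-coloured complete graph
(`true` = red, `false` = blue). -/
def MonoTriC {n : ℕ} (χ : Fin n → Fin n → Bool) (c : Bool) (t : Finset (Fin n)) : Prop :=
  t.card = 3 ∧ ∀ x ∈ t, ∀ y ∈ t, x ≠ y → χ x y = c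

lemma monoTri_of (χ : Fin 6 → Fin 6 → Bool) (hsym : ∀ a b, χ a b = χ b a) (c : Bool)
    (x y z : Fin 6) (hxy : x ≠ y) (hxz : x ≠ z) (hyz : y ≠ z)
    (h1 : χ x y = c) (h2 : χ x z = c) (h3 : χ y z = c) :
    MonoTriC χ c {x, y, z} := by
  refine ⟨Finset.card_eq_three.mpr ⟨x, y, z, hxy, hxz, hyz, rfl⟩, ?_⟩
  intro u hu w hw hne
  simp only [Finset.mem_insert, Finset.mem_singleton] at hu hw
  rcases hu with rfl | rfl | rfl <;> rcases hw with rfl | rfl | rfl <;>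
    first | exact absurd rfl hne | assumption | (rw [hsym]; assumption)

lemma build (χ : Fin 6 → Fin 6 → Bool) (hsym : ∀ a b, χ a b = χ b a)
    (v x p q r s : Fin 6)
    (hxp : x ≠ p) (hxq : x ≠ q) (hpq : p ≠ q)
    (hxr : x ≠ r) (hxs : x ≠ s) (hrs : r ≠ s)
    (hpr : p ≠ r) (hps : p ≠ s) (hqr : q ≠ r) (hqs : q ≠ s)
    (h1 : χ x p = true) (h2 : χ x q = true) (h3 : χ p q = true)
    (h4 : χ x r = false) (h5 : χ x s = false) (h6 : χ r s = false)
    (hv : v = x ∨ v = p ∨ v = q ∨ v = r ∨ v = s) :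
    ∃ tr tb : Finset (Fin 6),
      MonoTriC χ true tr ∧ MonoTriC χ false tb ∧ (tr ∩ tb).card = 1 ∧
      (v ∈ tr ∨ v ∈ tb) := by
  refine ⟨{x, p, q}, {x, r, s},
    monoTri_of χ hsym true x p q hxp hxq hpq h1 h2 h3,
    monoTri_of χ hsym false x r s hxr hxs hrs h4 h5 h6, ?_, ?_⟩
  · have hi : ({x, p, q} : Finset (Fin 6)) ∩ {x, r, s} = {x} := by
      ext u
      simp only [Finset.mem_inter, Finset.mem_insert, Finset.mem_singleton]
      constructor
      · rintro ⟨rfl | rfl | rfl, h⟩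
        · rfl
        · rcases h with h | h | h
          · exact absurd h.symm hxp
          · exact absurd h hpr
          · exact absurd h hps
        · rcases h with h | h | h
          · exact absurd h.symm hxq
          · exact absurd h hqr
          · exact absurd h hqs
      · rintro rfl; exact ⟨Or.inl rfl, Or.inl rfl⟩
    rw [hi]; exact Finset.card_singleton x
  · rcases hv with rfl | rfl | rfl | rfl | rfl <;> simp

lemma inner (χ : Fin 6 → Fin 6 → Bool) (hsym : ∀ a b, χ a b = χ b a)
    (a b c p q t : Fin 6)
    (hab : a ≠ b) (hac : a ≠ c) (hbc : b ≠ c)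
    (hpq : p ≠ q) (hpt : p ≠ t) (hqt : q ≠ t)
    (hap : a ≠ p) (haq : a ≠ q) (hat : a ≠ t)
    (hbp : b ≠ p) (hbq : b ≠ q) (hbt : b ≠ t)
    (hcp : c ≠ p) (hcq : c ≠ q) (hct : c ≠ t)
    (rab : χ a b = true) (rac : χ a c = true) (rbc : χ b c = true)
    (bpq : χ p q = false) (bpt : χ p t = false) (bqt : χ q t = false)
    (cap : χ a p = true) (caq : χ a q = true) :
    ∃ tr tb : Finset (Fin 6),
      MonoTriC χ true tr ∧ MonoTriC χ false tb ∧ (tr ∩ tb).card = 1 ∧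
      (a ∈ tr ∨ a ∈ tb) := by
  cases hpb : χ p b with
  | true =>
    apply build χ hsym a p a b q t <;>
      first | assumption | (symm; assumption) | (rw [hsym]; assumption) | tauto
  | false =>
  cases hpc : χ p c with
  | true =>
    apply build χ hsym a p a c q t <;>
      first | assumption | (symm; assumption) | (rw [hsym]; assumption) | tauto
  | false =>
  cases hqb : χ q b with
  | true =>
    apply build χ hsym a q a b p t <;>
      first | assumption | (symm; assumption) | (rw [hsym]; assumption) | tauto
  | false =>
  cases hqc : χ q c with
  | true =>
    apply build χ hsym a q a c p t <;>
      first | assumption | (symm; assumption) | (rw [hsym]; assumption) | tauto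
  | false =>
    apply build χ hsym a b a c p q <;>
      first | assumption | (symm; assumption) | (rw [hsym]; assumption) | tauto

lemma key (χ : Fin 6 → Fin 6 → Bool) (hsym : ∀ a b, χ a b = χ b a)
    (a b c d e f : Fin 6)
    (hab : a ≠ b) (hac : a ≠ c) (hbc : b ≠ c)
    (hde : d ≠ e) (hdf : d ≠ f) (hef : e ≠ f)
    (had : a ≠ d) (hae : a ≠ e) (haf : a ≠ f)
    (hbd : b ≠ d) (hbe : b ≠ e) (hbf : b ≠ f)
    (hcd : c ≠ d) (hce : c ≠ e) (hcf : c ≠ f)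
    (rab : χ a b = true) (rac : χ a c = true) (rbc : χ b c = true)
    (bde : χ d e = false) (bdf : χ d f = false) (bef : χ e f = false) :
    ∃ tr tb : Finset (Fin 6),
      MonoTriC χ true tr ∧ MonoTriC χ false tb ∧ (tr ∩ tb).card = 1 ∧
      (a ∈ tr ∨ a ∈ tb) := by
  cases hd : χ a d <;> cases he : χ a e <;> cases hf : χ a f
  · apply build χ hsym a a b c d e <;>
      first | assumption | (symm; assumption) | (rw [hsym]; assumption) | tauto
  · apply build χ hsym a a b c d e <;>
      first | assumption | (symm; assumption) | (rw [hsym]; assumption) | tauto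
  · apply build χ hsym a a b c d f <;>
      first | assumption | (symm; assumption) | (rw [hsym]; assumption) | tauto
  · apply inner χ hsym a b c e f d <;>
      first | assumption | (symm; assumption) | (rw [hsym]; assumption) | tauto
  · apply build χ hsym a a b c e f <;>
      first | assumption | (symm; assumption) | (rw [hsym]; assumption) | tauto
  · apply inner χ hsym a b c d f e <;>
      first | assumption | (symm; assumption) | (rw [hsym]; assumption) | tauto
  · apply inner χ hsym a b c d e f <;>
      first | assumption | (symm; assumption) | (rw [hsym]; assumption) | tauto
  · apply inner χ hsym a b c d e f <;>
      first | assumption | (symm; assumption) | (rw [hsym]; assumption) | tauto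

lemma mono_neg (χ : Fin 6 → Fin 6 → Bool) (c : Bool) (t : Finset (Fin 6)) :
    MonoTriC (fun x y => !(χ x y)) c t ↔ MonoTriC χ (!c) t := by
  unfold MonoTriC
  constructor <;> rintro ⟨h1, h2⟩ <;> refine ⟨h1, fun x hx y hy hxy => ?_⟩
  · have := h2 x hx y hy hxy; simp only at this; rw [← this, Bool.not_not]
  · have := h2 x hx y hy hxy; simp only [this, Bool.not_not]

lemma key' (χ : Fin 6 → Fin 6 → Bool) (hsym : ∀ a b, χ a b = χ b a)
    (a b c d e f : Fin 6)
    (hab : a ≠ b) (hac : a ≠ c) (hbc : b ≠ c)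
    (hde : d ≠ e) (hdf : d ≠ f) (hef : e ≠ f)
    (had : a ≠ d) (hae : a ≠ e) (haf : a ≠ f)
    (hbd : b ≠ d) (hbe : b ≠ e) (hbf : b ≠ f)
    (hcd : c ≠ d) (hce : c ≠ e) (hcf : c ≠ f)
    (rab : χ a b = true) (rac : χ a c = true) (rbc : χ b c = true)
    (bde : χ d e = false) (bdf : χ d f = false) (bef : χ e f = false) :
    ∃ tr tb : Finset (Fin 6),
      MonoTriC χ true tr ∧ MonoTriC χ false tb ∧ (tr ∩ tb).card = 1 ∧
      (d ∈ tr ∨ d ∈ tb) := by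
  have hsym' : ∀ x y, (fun x y => !(χ x y)) x y = (fun x y => !(χ x y)) y x :=
    fun x y => by simp [hsym x y]
  have hk := key (fun x y => !(χ x y)) hsym' d e f a b c
    hde hdf hef hab hac hbc had.symm hbd.symm hcd.symm hae.symm hbe.symm hce.symm
    haf.symm hbf.symm hcf.symm
    (by simp [bde]) (by simp [bdf]) (by simp [bef])
    (by simp [rab]) (by simp [rac]) (by simp [rbc])
  obtain ⟨tr, tb, h1, h2, hc, hm⟩ := hk
  exact ⟨tb, tr, (mono_neg χ false tb).mp h2, (mono_neg χ true tr).mp h1,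
    by rw [Finset.inter_comm]; exact hc, hm.symm⟩

/-- If a 2-edge-coloured `K_6` contains two vertex-disjoint monochromatic triangles of
different colours, then every vertex lies in a bowtie: a red triangle and a blue triangle
sharing exactly one vertex, one of which contains the vertex. -/
theorem bowtie_through_every_vertex_K6 (χ : Fin 6 → Fin 6 → Bool)
    (hsym : ∀ a b, χ a b = χ b a)
    (h : ∃ (t₁ t₂ : Finset (Fin 6)) (c : Bool),
      Disjoint t₁ t₂ ∧ MonoTriC χ c t₁ ∧ MonoTriC χ (!c) t₂) :
    ∀ v : Fin 6, ∃ tr tb : Finset (Fin 6),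
      MonoTriC χ true tr ∧ MonoTriC χ false tb ∧ (tr ∩ tb).card = 1 ∧
      (v ∈ tr ∨ v ∈ tb) := by
  intro v
  obtain ⟨t₁, t₂, cc, hdisj, m₁, m₂⟩ := h
  have hmain : ∃ s₁ s₂ : Finset (Fin 6),
      Disjoint s₁ s₂ ∧ MonoTriC χ true s₁ ∧ MonoTriC χ false s₂ := by
    cases cc
    · exact ⟨t₂, t₁, hdisj.symm, m₂, m₁⟩
    · exact ⟨t₁, t₂, hdisj, m₁, m₂⟩
  obtain ⟨s₁, s₂, hdisj, m₁, m₂⟩ := hmain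
  obtain ⟨a, b, c, hab, hac, hbc, rfl⟩ := Finset.card_eq_three.mp m₁.1
  obtain ⟨d, e, f, hde, hdf, hef, rfl⟩ := Finset.card_eq_three.mp m₂.1
  have hx : ∀ x ∈ ({a, b, c} : Finset (Fin 6)), ∀ y ∈ ({d, e, f} : Finset (Fin 6)), x ≠ y :=
    fun x hx y hy hxy => Finset.disjoint_left.mp hdisj hx (hxy ▸ hy)
  have had : a ≠ d := hx a (by simp) d (by simp)
  have hae : a ≠ e := hx a (by simp) e (by simp)
  have haf : a ≠ f := hx a (by simp) f (by simp)
  have hbd : b ≠ d := hx b (by simp) d (by simp)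
  have hbe : b ≠ e := hx b (by simp) e (by simp)
  have hbf : b ≠ f := hx b (by simp) f (by simp)
  have hcd : c ≠ d := hx c (by simp) d (by simp)
  have hce : c ≠ e := hx c (by simp) e (by simp)
  have hcf : c ≠ f := hx c (by simp) f (by simp)
  have rab : χ a b = true := m₁.2 a (by simp) b (by simp) hab
  have rac : χ a c = true := m₁.2 a (by simp) c (by simp) hac
  have rbc : χ b c = true := m₁.2 b (by simp) c (by simp) hbc
  have bde : χ d e = false := m₂.2 d (by simp) e (by simp) hde
  have bdf : χ d f = false := m₂.2 d (by simp) f (by simp) hdf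
  have bef : χ e f = false := m₂.2 e (by simp) f (by simp) hef
  have hcard : (({a, b, c} ∪ {d, e, f} : Finset (Fin 6))).card = 6 := by
    rw [Finset.card_union_of_disjoint hdisj, m₁.1, m₂.1]
  have huniv : ({a, b, c} ∪ {d, e, f} : Finset (Fin 6)) = Finset.univ :=
    Finset.eq_univ_of_card _ (by rw [hcard, Fintype.card_fin])
  have hv : v ∈ ({a, b, c} : Finset (Fin 6)) ∨ v ∈ ({d, e, f} : Finset (Fin 6)) :=
    Finset.mem_union.mp (huniv ▸ Finset.mem_univ v)
  simp only [Finset.mem_insert, Finset.mem_singleton] at hv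
  rcases hv with (rfl | rfl | rfl) | (rfl | rfl | rfl)
  · apply key χ hsym v b c d e f <;>
      first | assumption | (symm; assumption) | (rw [hsym]; assumption)
  · apply key χ hsym v a c d e f <;>
      first | assumption | (symm; assumption) | (rw [hsym]; assumption)
  · apply key χ hsym v a b d e f <;>
      first | assumption | (symm; assumption) | (rw [hsym]; assumption)
  · apply key' χ hsym a b c v e f <;>
      first | assumption | (symm; assumption) | (rw [hsym]; assumption)
  · apply key' χ hsym a b c v d f <;>
      first | assumption | (symm; assumption) | (rw [hsym]; assumption)
  · apply key' χ hsym a b c v d e <;>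
      first | assumption | (symm; assumption) | (rw [hsym]; assumption)
end

section
/- For all integers n, δ with 4n/5 ≤ δ ≤ n-1, there exists a 2-edge-coloured n-vertex graph G with minimum degree exactly δ such that every collection of pairwise vertex-disjoint monochromatic triangles in G has size at most min{5δ - 4n, (4δ - 3n)/2, (2δ - n)/3}. -/
open Finset

/-- class of vertex `v`: 0 for `V₀` (size `s`), then classes 1..5 each of size `m`. -/
def exCls (s m v : ℕ) : ℕ := if v < s then 0 else (v - s) / m + 1

/-- red colour predicate on classes (classes 0,1 merged). -/
def exRb (a b : ℕ) : Bool :=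
  ((a - 1 + 5 - (b - 1)) % 5 == 0) || ((a - 1 + 5 - (b - 1)) % 5 == 1) ||
    ((a - 1 + 5 - (b - 1)) % 5 == 4)

def exG (n s m : ℕ) : SimpleGraph (Fin n) where
  Adj u v := u ≠ v ∧ (exCls s m u = 0 ∨ exCls s m v = 0 ∨ exCls s m u ≠ exCls s m v)
  symm := by constructor; rintro u v ⟨h1, h2⟩; exact ⟨h1.symm, by tauto⟩
  loopless := by constructor; rintro v ⟨h, -⟩; exact h rfl

lemma exG_adj {n s m : ℕ} {u v : Fin n} : (exG n s m).Adj u v ↔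
    u ≠ v ∧ (exCls s m u = 0 ∨ exCls s m v = 0 ∨ exCls s m u ≠ exCls s m v) := Iff.rfl

lemma exCls_le {s m : ℕ} (hm : 0 < m) {v : ℕ} (hv : v < s + 5 * m) : exCls s m v ≤ 5 := by
  unfold exCls; split
  · omega
  · have : (v - s) / m < 5 := Nat.div_lt_of_lt_mul (by omega)
    omega

lemma exCls_eq_zero {s m v : ℕ} : exCls s m v = 0 ↔ v < s := by
  unfold exCls; split <;> simp <;> omega

lemma exCls_eq_succ {s m : ℕ} (hm : 0 < m) (j v : ℕ) :
    exCls s m v = j + 1 ↔ s + m * j ≤ v ∧ v < s + m * j + m := by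
  unfold exCls; split
  · constructor
    · omega
    · intro h
      have : s ≤ s + m * j := by omega
      omega
  · rw [show ((v - s) / m + 1 = j + 1) ↔ ((v - s) / m = j) by omega,
      show ((v - s) / m = j) ↔ (¬ ((v - s) / m < j) ∧ (v - s) / m < j + 1) by omega,
      Nat.div_lt_iff_lt_mul hm, Nat.div_lt_iff_lt_mul hm]
    have h1 : (j + 1) * m = m * j + m := by ring
    have h2 : j * m = m * j := by ring
    rw [h1, h2]
    omega

lemma exCls_le_one {s m v : ℕ} (hm : 0 < m) : exCls s m v ≤ 1 ↔ v < s + m := by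
  have h0 := exCls_eq_zero (s := s) (m := m) (v := v)
  have h1 := exCls_eq_succ (s := s) hm 0 v
  rw [Nat.mul_zero] at h1
  omega

lemma exCls_mem0125 {s m v : ℕ} (hm : 0 < m) (hv : v < s + 5 * m) :
    (exCls s m v ≤ 2 ∨ exCls s m v = 5) ↔ (v < s + 2 * m ∨ s + 4 * m ≤ v) := by
  have h0 := exCls_eq_zero (s := s) (m := m) (v := v)
  have h1 := exCls_eq_succ (s := s) hm 0 v
  have h2 := exCls_eq_succ (s := s) hm 1 v
  have h5 := exCls_eq_succ (s := s) hm 4 v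
  have hle := exCls_le hm hv
  rw [Nat.mul_zero] at h1
  rw [Nat.mul_one] at h2
  rw [show m * 4 = 4 * m by ring] at h5
  omega

lemma card_filter_val (n : ℕ) (p : ℕ → Prop) [DecidablePred p] :
    (univ.filter fun v : Fin n => p v.val).card = ((range n).filter p).card := by
  refine Finset.card_bij (fun v _ => v.val) ?_ ?_ ?_
  · intro a ha; simp only [mem_filter, mem_range, mem_univ, true_and] at ha ⊢
    exact ⟨a.isLt, ha⟩
  · intro a _ b _ h; exact Fin.val_injective h
  · intro b hb; simp only [mem_filter, mem_range, mem_univ, true_and] at hb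
    exact ⟨⟨b, hb.1⟩, by simp [hb.2], rfl⟩

set_option synthInstance.maxSize 2000 in
set_option synthInstance.maxHeartbeats 1000000 in
lemma key_red : ∀ a b c : Fin 6,
    (a.val = 0 ∨ b.val = 0 ∨ a.val ≠ b.val) →
    (a.val = 0 ∨ c.val = 0 ∨ a.val ≠ c.val) →
    (b.val = 0 ∨ c.val = 0 ∨ b.val ≠ c.val) →
    exRb a.val b.val = true → exRb a.val c.val = true → exRb b.val c.val = true →
    ((a.val = 0 ∨ b.val = 0 ∨ c.val = 0) ∧
    ((a.val ≤ 1 ∧ b.val ≤ 1) ∨ (a.val ≤ 1 ∧ c.val ≤ 1) ∨ (b.val ≤ 1 ∧ c.val ≤ 1)) ∧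
    ((a.val ≤ 2 ∨ a.val = 5) ∧ (b.val ≤ 2 ∨ b.val = 5) ∧ (c.val ≤ 2 ∨ c.val = 5))) := by
  decide

lemma key_blue : ∀ a b c : Fin 6,
    exRb a.val b.val = false → exRb a.val c.val = false → exRb b.val c.val = false → False := by
  decide

lemma exRb_symm : ∀ a b : Fin 6, exRb a.val b.val = exRb b.val a.val := by decide

/-- A monochromatic triangle of a 2-edge-coloured graph `G`. -/
def IsMonoTriIn {n : ℕ} (G : SimpleGraph (Fin n)) (χ : Fin n → Fin n → Bool)
    (t : Finset (Fin n)) : Prop :=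
  t.card = 3 ∧ (∀ x ∈ t, ∀ y ∈ t, x ≠ y → G.Adj x y) ∧
    ∃ c : Bool, ∀ x ∈ t, ∀ y ∈ t, x ≠ y → χ x y = c

/-- Extremal example for Moon-type tilings: for `4n/5 ≤ δ ≤ n-1` there is a 2-edge-coloured
`n`-vertex graph with minimum degree exactly `δ` in which every collection of pairwise
vertex-disjoint monochromatic triangles has size at most
`min {5δ - 4n, (4δ - 3n)/2, (2δ - n)/3}`. -/
theorem extremal_example_moon (n δ : ℕ) (hn : 0 < n)
    (h1 : 4 * n ≤ 5 * δ) (h2 : δ ≤ n - 1) :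
    ∃ (G : SimpleGraph (Fin n)) (χ : Fin n → Fin n → Bool),
      (∀ a b, χ a b = χ b a) ∧
      (∀ v, δ ≤ (G.neighborSet v).ncard) ∧
      (∃ v, (G.neighborSet v).ncard = δ) ∧
      ∀ T : Finset (Finset (Fin n)),
        (↑T : Set (Finset (Fin n))).Pairwise (fun a b => Disjoint a b) →
        (∀ t ∈ T, IsMonoTriIn G χ t) →
        T.card ≤ 5 * δ - 4 * n ∧ 2 * T.card ≤ 4 * δ - 3 * n ∧ 3 * T.card ≤ 2 * δ - n := by
  obtain ⟨s, m, hm, hn5, hδ⟩ :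
      ∃ s m, 0 < m ∧ n = s + 5 * m ∧ δ + m = n := ⟨5 * δ - 4 * n, n - δ, by omega, by omega, by omega⟩
  have hcls : ∀ v : Fin n, exCls s m v.val ≤ 5 := fun v => exCls_le hm (by omega)
  -- degree computation for vertices of class `j + 1`
  have hdeg : ∀ (v : Fin n) (j : ℕ), exCls s m v.val = j + 1 →
      ((exG n s m).neighborSet v).ncard = n - (min (s + m * j + m) n - (s + m * j)) := by
    intro v j hj
    have hset : (exG n s m).neighborSet v =
        ↑(univ.filter fun u : Fin n => ¬ exCls s m u.val = exCls s m v.val) := by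
      ext u
      simp only [SimpleGraph.mem_neighborSet, exG_adj, coe_filter, Set.mem_setOf_eq, mem_univ,
        true_and, mem_coe]
      constructor
      · rintro ⟨hne, h | h | h⟩
        · omega
        · omega
        · omega
      · intro h
        refine ⟨fun he => h (by rw [he]), Or.inr (Or.inr (fun he => h he.symm))⟩
    rw [hset, Set.ncard_coe_finset]
    have hsplit := Finset.card_filter_add_card_filter_not
      (s := (univ : Finset (Fin n))) (p := fun u : Fin n => exCls s m u.val = exCls s m v.val)
    rw [card_univ, Fintype.card_fin] at hsplit
    have hcc : (univ.filter fun u : Fin n => exCls s m u.val = exCls s m v.val).card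
        = min (s + m * j + m) n - (s + m * j) := by
      rw [card_filter_val n (fun w => exCls s m w = exCls s m v.val)]
      have heq : (range n).filter (fun w => exCls s m w = exCls s m v.val)
          = Ico (s + m * j) (min (s + m * j + m) n) := by
        ext w
        simp only [mem_filter, mem_range, mem_Ico, hj, exCls_eq_succ hm]
        omega
      rw [heq, Nat.card_Ico]
    omega
  refine ⟨exG n s m, fun u v => exRb (exCls s m u.val) (exCls s m v.val), ?_, ?_, ?_, ?_⟩
  · -- symmetry of the colouring
    intro a b
    exact exRb_symm ⟨exCls s m a.val, by have := hcls a; omega⟩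
      ⟨exCls s m b.val, by have := hcls b; omega⟩
  · -- minimum degree at least δ
    intro v
    by_cases h0 : exCls s m v.val = 0
    · have hset : (exG n s m).neighborSet v = ↑(univ.filter fun u : Fin n => ¬ u = v) := by
        ext u
        simp only [SimpleGraph.mem_neighborSet, exG_adj, coe_filter, Set.mem_setOf_eq, mem_univ,
          true_and, mem_coe, h0]
        constructor
        · rintro ⟨hne, -⟩ he
          exact hne he.symm
        · intro hne
          exact ⟨fun he => hne he.symm, Or.inl trivial⟩
      rw [hset, Set.ncard_coe_finset, filter_ne', card_erase_of_mem (mem_univ v), card_univ,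
        Fintype.card_fin]
      omega
    · obtain ⟨j, hj⟩ : ∃ j, exCls s m v.val = j + 1 := ⟨exCls s m v.val - 1, by omega⟩
      rw [hdeg v j hj]
      omega
  · -- a vertex of degree exactly δ
    refine ⟨⟨s, by omega⟩, ?_⟩
    have hj : exCls s m s = 0 + 1 := by
      rw [exCls_eq_succ (s := s) hm]
      omega
    rw [hdeg ⟨s, by omega⟩ 0 hj]
    omega
  · -- the triangle bound
    intro T hdisT htri
    have hS0card : (univ.filter fun u : Fin n => exCls s m u.val = 0).card = s := by
      rw [card_filter_val n (fun w => exCls s m w = 0)]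
      have : (range n).filter (fun w => exCls s m w = 0) = range s := by
        ext w
        simp only [mem_filter, mem_range, exCls_eq_zero]
        omega
      rw [this, card_range]
    have hS01card : (univ.filter fun u : Fin n => exCls s m u.val ≤ 1).card = s + m := by
      rw [card_filter_val n (fun w => exCls s m w ≤ 1)]
      have : (range n).filter (fun w => exCls s m w ≤ 1) = range (s + m) := by
        ext w
        simp only [mem_filter, mem_range, exCls_le_one hm]
        omega
      rw [this, card_range]
    have hS0125card :
        (univ.filter fun u : Fin n => exCls s m u.val ≤ 2 ∨ exCls s m u.val = 5).card
          = s + 3 * m := by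
      rw [card_filter_val n (fun w => exCls s m w ≤ 2 ∨ exCls s m w = 5)]
      have heq : (range n).filter (fun w => exCls s m w ≤ 2 ∨ exCls s m w = 5)
          = range (s + 2 * m) ∪ Ico (s + 4 * m) n := by
        ext w
        simp only [mem_filter, mem_range, mem_union, mem_Ico]
        constructor
        · rintro ⟨hw, hc⟩
          have := (exCls_mem0125 hm (by omega)).1 hc
          omega
        · intro h
          have hw : w < n := by omega
          exact ⟨hw, (exCls_mem0125 hm (by omega)).2 (by omega)⟩
      rw [heq, card_union_of_disjoint, card_range, Nat.card_Ico]
      · omega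
      · simp only [disjoint_left, mem_range, mem_Ico]
        intro a ha hb
        omega
    -- per-triangle counting facts
    have hkey : ∀ t ∈ T,
        (1 ≤ (t ∩ univ.filter fun u : Fin n => exCls s m u.val = 0).card) ∧
        (2 ≤ (t ∩ univ.filter fun u : Fin n => exCls s m u.val ≤ 1).card) ∧
        ((t ∩ univ.filter fun u : Fin n =>
          exCls s m u.val ≤ 2 ∨ exCls s m u.val = 5).card = 3) := by
      intro t ht
      obtain ⟨hc3, hadj, c, hcol⟩ := htri t ht
      obtain ⟨x, y, z, hxy, hxz, hyz, hteq⟩ := Finset.card_eq_three.1 hc3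
      have hx : x ∈ t := by rw [hteq]; simp
      have hy : y ∈ t := by rw [hteq]; simp
      have hz : z ∈ t := by rw [hteq]; simp
      have hAxy := ((exG_adj).1 (hadj x hx y hy hxy)).2
      have hAxz := ((exG_adj).1 (hadj x hx z hz hxz)).2
      have hAyz := ((exG_adj).1 (hadj y hy z hz hyz)).2
      have hcxy := hcol x hx y hy hxy
      have hcxz := hcol x hx z hz hxz
      have hcyz := hcol y hy z hz hyz
      cases c with
      | false =>
        exact (key_blue ⟨exCls s m x.val, by have := hcls x; omega⟩
          ⟨exCls s m y.val, by have := hcls y; omega⟩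
          ⟨exCls s m z.val, by have := hcls z; omega⟩ hcxy hcxz hcyz).elim
      | true =>
        obtain ⟨hone, htwo, hall⟩ := key_red ⟨exCls s m x.val, by have := hcls x; omega⟩
          ⟨exCls s m y.val, by have := hcls y; omega⟩
          ⟨exCls s m z.val, by have := hcls z; omega⟩
          hAxy hAxz hAyz hcxy hcxz hcyz
        simp only [Fin.val_mk] at hone htwo hall
        refine ⟨?_, ?_, ?_⟩
        · rw [Nat.one_le_iff_ne_zero, ← Nat.pos_iff_ne_zero, Finset.card_pos]
          rcases hone with h | h | h
          · exact ⟨x, mem_inter.2 ⟨hx, mem_filter.2 ⟨mem_univ _, h⟩⟩⟩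
          · exact ⟨y, mem_inter.2 ⟨hy, mem_filter.2 ⟨mem_univ _, h⟩⟩⟩
          · exact ⟨z, mem_inter.2 ⟨hz, mem_filter.2 ⟨mem_univ _, h⟩⟩⟩
        · refine Nat.succ_le_of_lt (Finset.one_lt_card.2 ?_)
          rcases htwo with ⟨ha, hb⟩ | ⟨ha, hb⟩ | ⟨ha, hb⟩
          · exact ⟨x, mem_inter.2 ⟨hx, mem_filter.2 ⟨mem_univ _, ha⟩⟩,
              y, mem_inter.2 ⟨hy, mem_filter.2 ⟨mem_univ _, hb⟩⟩, hxy⟩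
          · exact ⟨x, mem_inter.2 ⟨hx, mem_filter.2 ⟨mem_univ _, ha⟩⟩,
              z, mem_inter.2 ⟨hz, mem_filter.2 ⟨mem_univ _, hb⟩⟩, hxz⟩
          · exact ⟨y, mem_inter.2 ⟨hy, mem_filter.2 ⟨mem_univ _, ha⟩⟩,
              z, mem_inter.2 ⟨hz, mem_filter.2 ⟨mem_univ _, hb⟩⟩, hyz⟩
        · have hsub : t ⊆ univ.filter fun u : Fin n =>
              exCls s m u.val ≤ 2 ∨ exCls s m u.val = 5 := by
            intro w hw
            rw [hteq] at hw
            simp only [mem_insert, mem_singleton] at hw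
            rcases hw with rfl | rfl | rfl
            · exact mem_filter.2 ⟨mem_univ _, hall.1⟩
            · exact mem_filter.2 ⟨mem_univ _, hall.2.1⟩
            · exact mem_filter.2 ⟨mem_univ _, hall.2.2⟩
          rw [Finset.inter_eq_left.2 hsub, hc3]
    -- summing over the disjoint triangles
    have hsum : ∀ S : Finset (Fin n), ∑ t ∈ T, (t ∩ S).card ≤ S.card := by
      intro S
      have hdis : ∀ t1 ∈ T, ∀ t2 ∈ T, t1 ≠ t2 → Disjoint (t1 ∩ S) (t2 ∩ S) := by
        intro t1 h1 t2 h2 hne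
        exact Finset.disjoint_of_subset_left (inter_subset_left)
          (Finset.disjoint_of_subset_right (inter_subset_left)
            (hdisT (Finset.mem_coe.2 h1) (Finset.mem_coe.2 h2) hne))
      calc ∑ t ∈ T, (t ∩ S).card = (T.biUnion fun t => t ∩ S).card :=
            (Finset.card_biUnion hdis).symm
        _ ≤ S.card := Finset.card_le_card (by
            intro w hw
            rw [Finset.mem_biUnion] at hw
            obtain ⟨t, -, hw⟩ := hw
            exact (mem_inter.1 hw).2)
    have hb1 : T.card ≤ s := by
      calc T.card = ∑ _t ∈ T, 1 := by simp
        _ ≤ ∑ t ∈ T, (t ∩ univ.filter fun u : Fin n => exCls s m u.val = 0).card :=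
            Finset.sum_le_sum fun t ht => (hkey t ht).1
        _ ≤ _ := le_of_le_of_eq (hsum _) hS0card
    have hb2 : 2 * T.card ≤ s + m := by
      calc 2 * T.card = ∑ _t ∈ T, 2 := by simp [mul_comm]
        _ ≤ ∑ t ∈ T, (t ∩ univ.filter fun u : Fin n => exCls s m u.val ≤ 1).card :=
            Finset.sum_le_sum fun t ht => (hkey t ht).2.1
        _ ≤ _ := le_of_le_of_eq (hsum _) hS01card
    have hb3 : 3 * T.card ≤ s + 3 * m := by
      calc 3 * T.card = ∑ _t ∈ T, 3 := by simp [mul_comm]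
        _ ≤ ∑ t ∈ T, (t ∩ univ.filter fun u : Fin n =>
              exCls s m u.val ≤ 2 ∨ exCls s m u.val = 5).card :=
            Finset.sum_le_sum fun t ht => le_of_eq (hkey t ht).2.2.symm
        _ ≤ _ := le_of_le_of_eq (hsum _) hS0125card
    omega
end

section
/- For all integers n, δ with 7n/8 ≤ δ ≤ n-1, there exists a 2-edge-coloured n-vertex graph with minimum degree exactly δ in which every collection of pairwise vertex-disjoint monochromatic triangles has size at most (2δ - n)/3. -/
/-- Class of a vertex: 0 if in `S₁`, 1 if in `S₂`, 2 if in `R`. -/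
def clsAlt (k : ℕ) {n : ℕ} (i : Fin n) : ℕ :=
  if i.val < k then 0 else if i.val < 2 * k then 1 else 2

lemma clsAlt_le (k : ℕ) {n : ℕ} (i : Fin n) : clsAlt k i ≤ 2 := by
  unfold clsAlt; split <;> [omega; (split <;> omega)]

/-- The extremal graph: all pairs adjacent except those inside class 0 or inside class 1. -/
def GAlt (k : ℕ) (n : ℕ) : SimpleGraph (Fin n) where
  Adj x y := x ≠ y ∧ (clsAlt k x = clsAlt k y → clsAlt k x = 2)
  symm := ⟨by
    intro x y ⟨h1, h2⟩
    exact ⟨h1.symm, fun h => h.trans (h2 h.symm)⟩⟩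
  loopless := ⟨fun x h => h.1 rfl⟩

lemma card_filter_fin (n : ℕ) (p : ℕ → Prop) [DecidablePred p] :
    (Finset.univ.filter (fun i : Fin n => p i.val)).card
      = ((Finset.range n).filter p).card := by
  apply Finset.card_bij (fun i _ => i.val)
  · intro a ha
    simp only [Finset.mem_filter, Finset.mem_range, Finset.mem_univ, true_and] at ha ⊢
    exact ⟨a.isLt, ha⟩
  · intro a _ b _ h
    exact Fin.val_injective h
  · intro b hb
    simp only [Finset.mem_filter, Finset.mem_range] at hb
    exact ⟨⟨b, hb.1⟩, by simp [hb.2], rfl⟩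

lemma neighborSet_GAlt (k n : ℕ) (v : Fin n) :
    (GAlt k n).neighborSet v = ↑(Finset.univ.filter
      (fun w => v ≠ w ∧ (clsAlt k v = clsAlt k w → clsAlt k v = 2))) := by
  ext w
  simp [GAlt, SimpleGraph.neighborSet]

lemma clsAlt_eq_iff (k n : ℕ) (j : ℕ) (hj : j < 2) (w : Fin n) :
    clsAlt k w = j ↔ (j * k ≤ w.val ∧ w.val < (j + 1) * k) := by
  interval_cases j <;> (unfold clsAlt; split <;> [skip; split] <;> omega)

lemma card_cls (k n : ℕ) (h2k : 2 * k ≤ n) (j : ℕ) (hj : j < 2) :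
    (Finset.univ.filter (fun w : Fin n => clsAlt k w = j)).card = k := by
  rw [Finset.filter_congr (fun w _ => clsAlt_eq_iff k n j hj w)]
  rw [card_filter_fin n (fun m => j * k ≤ m ∧ m < (j + 1) * k)]
  have : (Finset.range n).filter (fun m => j * k ≤ m ∧ m < (j + 1) * k)
      = Finset.Ico (j * k) ((j + 1) * k) := by
    ext m
    simp only [Finset.mem_filter, Finset.mem_range, Finset.mem_Ico]
    constructor
    · rintro ⟨_, h⟩; exact h
    · rintro ⟨ha, hb⟩
      exact ⟨by nlinarith, ha, hb⟩
  rw [this, Nat.card_Ico]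
  ring_nf
  omega

lemma ncard_neighborSet_GAlt (k n : ℕ) (h2k : 2 * k ≤ n) (v : Fin n) :
    ((GAlt k n).neighborSet v).ncard
      = if clsAlt k v = 2 then n - 1 else n - k := by
  rw [neighborSet_GAlt, Set.ncard_coe_finset]
  by_cases hv : clsAlt k v = 2
  · rw [if_pos hv]
    have heq : (Finset.univ.filter
        (fun w => v ≠ w ∧ (clsAlt k v = clsAlt k w → clsAlt k v = 2)))
        = Finset.univ.erase v := by
      ext w
      simp only [Finset.mem_filter, Finset.mem_univ, true_and, Finset.mem_erase, and_true]
      constructor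
      · rintro ⟨h, _⟩; exact h.symm
      · intro h; exact ⟨h.symm, fun _ => hv⟩
    rw [heq, Finset.card_erase_of_mem (Finset.mem_univ v), Finset.card_univ,
      Fintype.card_fin]
  · rw [if_neg hv]
    have heq : (Finset.univ.filter
        (fun w => v ≠ w ∧ (clsAlt k v = clsAlt k w → clsAlt k v = 2)))
        = Finset.univ.filter (fun w => ¬ clsAlt k w = clsAlt k v) := by
      ext w
      simp only [Finset.mem_filter, Finset.mem_univ, true_and]
      constructor
      · rintro ⟨_, h2⟩ h3; exact hv (h2 h3.symm)
      · intro h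
        exact ⟨fun he => h (congrArg (clsAlt k) he.symm), fun hc => absurd hc.symm h⟩
    rw [heq, Finset.filter_not, Finset.card_sdiff_of_subset (Finset.filter_subset _ _),
      Finset.card_univ, Fintype.card_fin]
    have hlt : clsAlt k v < 2 := lt_of_le_of_ne (clsAlt_le k v) hv
    rw [card_cls k n h2k (clsAlt k v) hlt]

lemma clsAlt_eq_two_iff (k n : ℕ) (w : Fin n) :
    clsAlt k w = 2 ↔ 2 * k ≤ w.val := by
  unfold clsAlt; split <;> [omega; (split <;> omega)]

/-- Alternative extremal example: for `7n/8 ≤ δ ≤ n-1` there is a 2-edge-coloured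
`n`-vertex graph with minimum degree exactly `δ` in which every collection of pairwise
vertex-disjoint monochromatic triangles has size at most `(2δ - n)/3`. -/
theorem extremal_example_moon_alt (n δ : ℕ) (hn : 0 < n)
    (h1 : 7 * n ≤ 8 * δ) (h2 : δ ≤ n - 1) :
    ∃ (G : SimpleGraph (Fin n)) (χ : Fin n → Fin n → Bool),
      (∀ a b, χ a b = χ b a) ∧
      (∀ v, δ ≤ (G.neighborSet v).ncard) ∧
      (∃ v, (G.neighborSet v).ncard = δ) ∧
      ∀ T : Finset (Finset (Fin n)),
        (↑T : Set (Finset (Fin n))).Pairwise (fun a b => Disjoint a b) →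
        (∀ t ∈ T, IsMonoTriIn G χ t) →
        3 * T.card ≤ 2 * δ - n := by
  set k := n - δ with hkdef
  have hk1 : 1 ≤ k := by omega
  have h2k : 2 * k ≤ n := by omega
  refine ⟨GAlt k n, fun x y => xor (decide (clsAlt k x = 2)) (decide (clsAlt k y = 2)),
    ?_, ?_, ?_, ?_⟩
  · intro a b; exact Bool.xor_comm _ _
  · intro v
    rw [ncard_neighborSet_GAlt k n h2k v]
    split <;> omega
  · refine ⟨⟨0, hn⟩, ?_⟩
    rw [ncard_neighborSet_GAlt k n h2k]
    have h0 : clsAlt k (⟨0, hn⟩ : Fin n) = 0 := by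
      unfold clsAlt; rw [if_pos]; exact hk1
    rw [if_neg (by omega)]
    omega
  · intro T hPW hT
    -- every vertex of every monochromatic triangle lies in class 2
    have hR : ∀ t ∈ T, ∀ v ∈ t, clsAlt k v = 2 := by
      intro t ht v hv
      obtain ⟨hcard, hadj, c0, hcol⟩ := hT t ht
      obtain ⟨a, b, c3, hab, hac, hbc, hteq⟩ := Finset.card_eq_three.mp hcard
      have ha : a ∈ t := by rw [hteq]; simp
      have hb : b ∈ t := by rw [hteq]; simp
      have hc : c3 ∈ t := by rw [hteq]; simp
      have f1 : clsAlt k a = clsAlt k b → clsAlt k a = 2 := (hadj a ha b hb hab).2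
      have f2 : clsAlt k a = clsAlt k c3 → clsAlt k a = 2 := (hadj a ha c3 hc hac).2
      have f3 : clsAlt k b = clsAlt k c3 → clsAlt k b = 2 := (hadj b hb c3 hc hbc).2
      have g1 := hcol a ha b hb hab
      have g2 := hcol a ha c3 hc hac
      have g3 := hcol b hb c3 hc hbc
      have la := clsAlt_le k a
      have lb := clsAlt_le k b
      have lc := clsAlt_le k c3
      have key : clsAlt k a = 2 ∧ clsAlt k b = 2 ∧ clsAlt k c3 = 2 := by
        by_cases pa : clsAlt k a = 2 <;> by_cases pb : clsAlt k b = 2 <;>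
          by_cases pc : clsAlt k c3 = 2
        · exact ⟨pa, pb, pc⟩
        all_goals try { exfalso; cases c0 <;> simp [pa, pb, pc] at g1 g2 g3 }
        · exfalso
          have d1 : clsAlt k a ≠ clsAlt k b := fun h => pa (f1 h)
          have d2 : clsAlt k a ≠ clsAlt k c3 := fun h => pa (f2 h)
          have d3 : clsAlt k b ≠ clsAlt k c3 := fun h => pb (f3 h)
          omega
      rw [hteq] at hv
      simp only [Finset.mem_insert, Finset.mem_singleton] at hv
      rcases hv with rfl | rfl | rfl
      · exact key.1
      · exact key.2.1
      · exact key.2.2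
    have hdisj : ∀ x ∈ T, ∀ y ∈ T, x ≠ y → Disjoint (id x) (id y) :=
      fun x hx y hy hxy => hPW (Finset.mem_coe.mpr hx) (Finset.mem_coe.mpr hy) hxy
    have hsub : T.biUnion id ⊆ Finset.univ.filter (fun w : Fin n => clsAlt k w = 2) := by
      intro v hv
      simp only [Finset.mem_biUnion, id] at hv
      obtain ⟨t, ht, hvt⟩ := hv
      simp only [Finset.mem_filter, Finset.mem_univ, true_and]
      exact hR t ht v hvt
    have hcardU : (T.biUnion id).card = 3 * T.card := by
      rw [Finset.card_biUnion hdisj]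
      have h3 : ∀ t ∈ T, (id t).card = 3 := fun t ht => (hT t ht).1
      rw [Finset.sum_congr rfl h3, Finset.sum_const, smul_eq_mul, mul_comm]
    have hRcard : (Finset.univ.filter (fun w : Fin n => clsAlt k w = 2)).card
        = n - 2 * k := by
      rw [Finset.filter_congr (fun w _ => clsAlt_eq_two_iff k n w)]
      rw [card_filter_fin n (fun m => 2 * k ≤ m)]
      have : (Finset.range n).filter (fun m => 2 * k ≤ m) = Finset.Ico (2 * k) n := by
        ext m
        simp only [Finset.mem_filter, Finset.mem_range, Finset.mem_Ico]
        omega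
      rw [this, Nat.card_Ico]
    have := Finset.card_le_card hsub
    omega
end

section
/- For all integers n, δ with 5 ≤ δ ≤ n-1, there exists a 2-edge-coloured n-vertex graph with minimum degree exactly δ containing no monochromatic copy of m·K_3 for any m > ⌊(δ+1)/5⌋. -/
lemma card_filter_fin_aux (n : ℕ) (P : ℕ → Prop) [DecidablePred P] :
    (Finset.univ.filter (fun u : Fin n => P u.val)).card = ((Finset.Iio n).filter P).card := by
  rw [← Fin.map_valEmbedding_univ, Finset.filter_map, Finset.card_map]
  rfl

lemma three_elems {α : Type*} [DecidableEq α] (t : Finset α) (ht : t.card = 3) {x : α}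
    (hx : x ∈ t) : ∃ y ∈ t, ∃ z ∈ t, y ≠ x ∧ z ≠ x ∧ y ≠ z := by
  have h1 : (t.erase x).card = 2 := by rw [Finset.card_erase_of_mem hx, ht]
  obtain ⟨y, hy⟩ := Finset.card_pos.mp (by omega : 0 < (t.erase x).card)
  have h2 : ((t.erase x).erase y).card = 1 := by rw [Finset.card_erase_of_mem hy, h1]
  obtain ⟨z, hz⟩ := Finset.card_pos.mp (by omega : 0 < ((t.erase x).erase y).card)
  refine ⟨y, Finset.mem_of_mem_erase hy, z,
    Finset.mem_of_mem_erase (Finset.mem_of_mem_erase hz), Finset.ne_of_mem_erase hy,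
    Finset.ne_of_mem_erase (Finset.mem_of_mem_erase hz), (Finset.ne_of_mem_erase hz).symm⟩

private def besG (n sS : ℕ) : SimpleGraph (Fin n) where
  Adj u v := u ≠ v ∧ ¬(u.val < sS ∧ v.val < sS)
  symm := by constructor; intro u v h; exact ⟨h.1.symm, by tauto⟩
  loopless := by constructor; intro u h; exact h.1 rfl

@[simp] private lemma besG_adj (n sS : ℕ) (u v : Fin n) :
    (besG n sS).Adj u v ↔ u ≠ v ∧ ¬(u.val < sS ∧ v.val < sS) := Iff.rfl

private def besχ (n sS rE : ℕ) (u v : Fin n) : Bool :=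
  decide ((sS ≤ u.val ∧ u.val < rE ∧ sS ≤ v.val ∧ v.val < rE) ∨
      (u.val < sS ∧ rE ≤ v.val) ∨ (rE ≤ u.val ∧ v.val < sS))

/-- Extremal example for Burr–Erdős–Spencer-type tilings: for `5 ≤ δ ≤ n-1` there is a
2-edge-coloured `n`-vertex graph with minimum degree exactly `δ` containing no
monochromatic copy of `m·K_3` with `m > ⌊(δ+1)/5⌋`; equivalently, every family of pairwise
vertex-disjoint triangles whose edges all have one single colour has size `≤ ⌊(δ+1)/5⌋`. -/
theorem extremal_example_bes (n δ : ℕ) (h1 : 5 ≤ δ) (h2 : δ ≤ n - 1) (hn : 0 < n) :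
    ∃ (G : SimpleGraph (Fin n)) (χ : Fin n → Fin n → Bool),
      (∀ a b, χ a b = χ b a) ∧
      (∀ v, δ ≤ (G.neighborSet v).ncard) ∧
      (∃ v, (G.neighborSet v).ncard = δ) ∧
      ∀ (c : Bool) (T : Finset (Finset (Fin n))),
        (↑T : Set (Finset (Fin n))).Pairwise (fun a b => Disjoint a b) →
        (∀ t ∈ T, t.card = 3 ∧ (∀ x ∈ t, ∀ y ∈ t, x ≠ y → G.Adj x y) ∧
          ∀ x ∈ t, ∀ y ∈ t, x ≠ y → χ x y = c) →
        T.card ≤ (δ + 1) / 5 := by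
  set k := (δ + 1) / 5 with hk
  set sS := n - δ with hsS
  set rE := sS + (3 * k + 2) with hrE
  have hkey : 5 * k ≤ δ + 1 ∧ δ + 1 < 5 * k + 5 ∧ 3 * k + 2 ≤ δ ∧ 1 ≤ sS ∧
      n = δ + sS ∧ rE ≤ n ∧ n - rE ≤ 2 * k + 1 ∧ 1 ≤ k := by
    refine ⟨?_, ?_, ?_, ?_, ?_, ?_, ?_, ?_⟩ <;> omega
  obtain ⟨hk1, hk2, hk3, hs1, hn1, hre, hb1, hkpos⟩ := hkey
  refine ⟨besG n sS, besχ n sS rE, ?_, ?_, ?_, ?_⟩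
  · intro a b
    simp only [besχ, decide_eq_decide]
    tauto
  · -- min degree ≥ δ
    intro v
    by_cases hv : v.val < sS
    · have hset : (besG n sS).neighborSet v =
          ↑(Finset.univ.filter (fun u : Fin n => sS ≤ u.val)) := by
        ext u
        simp only [SimpleGraph.mem_neighborSet, besG_adj, Finset.coe_filter, Set.mem_setOf_eq,
          Finset.mem_univ, true_and]
        constructor
        · rintro ⟨hne, hns⟩; omega
        · intro hu
          refine ⟨fun h => ?_, by omega⟩
          subst h; omega
      rw [hset, Set.ncard_coe_finset, card_filter_fin_aux]
      have : (Finset.Iio n).filter (fun u => sS ≤ u) = Finset.Ico sS n := by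
        ext u; simp [Finset.mem_Ico, Finset.mem_Iio]; omega
      rw [this, Nat.card_Ico]; omega
    · have hset : (besG n sS).neighborSet v = {v}ᶜ := by
        ext u
        simp only [SimpleGraph.mem_neighborSet, besG_adj, Set.mem_compl_iff,
          Set.mem_singleton_iff]
        constructor
        · rintro ⟨hne, -⟩ h; exact hne (h ▸ rfl)
        · intro hne; exact ⟨fun h => hne (by exact h ▸ rfl), by omega⟩
      rw [hset, ← Finset.coe_singleton, ← Finset.coe_compl, Set.ncard_coe_finset,
        Finset.card_compl, Finset.card_singleton, Fintype.card_fin]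
      omega
  · -- exists vertex of degree δ
    refine ⟨⟨0, hn⟩, ?_⟩
    have hset : (besG n sS).neighborSet ⟨0, hn⟩ =
        ↑(Finset.univ.filter (fun u : Fin n => sS ≤ u.val)) := by
      ext u
      simp only [SimpleGraph.mem_neighborSet, besG_adj, Finset.coe_filter, Set.mem_setOf_eq,
        Finset.mem_univ, true_and]
      constructor
      · rintro ⟨hne, hns⟩
        by_contra h
        exact hns ⟨by omega, by omega⟩
      · intro hu
        refine ⟨fun h => ?_, by omega⟩
        have : u.val = 0 := by rw [← h]
        omega
    rw [hset, Set.ncard_coe_finset, card_filter_fin_aux]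
    have : (Finset.Iio n).filter (fun u => sS ≤ u) = Finset.Ico sS n := by
      ext u; simp [Finset.mem_Ico, Finset.mem_Iio]; omega
    rw [this, Nat.card_Ico]; omega
  · intro c T hpair hT
    have hdisj : ∀ a ∈ T, ∀ b ∈ T, a ≠ b → Disjoint a b := fun a ha b hb hab =>
      hpair ha hb hab
    cases c with
    | true =>
      have hsub : ∀ t ∈ T, ∀ x ∈ t, sS ≤ x.val ∧ x.val < rE := by
        intro t ht x hx
        obtain ⟨hcard, hadj, hcol⟩ := hT t ht
        obtain ⟨y, hy, z, hz, hyx, hzx, hyz⟩ := three_elems t hcard hx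
        have e1 := hcol x hx y hy (Ne.symm hyx)
        have e2 := hcol x hx z hz (Ne.symm hzx)
        have e3 := hcol y hy z hz hyz
        simp only [besχ, decide_eq_true_eq] at e1 e2 e3
        omega
      have hcard : (T.biUnion id).card = ∑ t ∈ T, t.card := Finset.card_biUnion hdisj
      have hsum : ∑ t ∈ T, t.card = 3 * T.card := by
        rw [Finset.sum_congr rfl (fun t ht => (hT t ht).1)]
        simp [mul_comm]
      have hsubR : T.biUnion id ⊆
          Finset.univ.filter (fun u : Fin n => sS ≤ u.val ∧ u.val < rE) := by
        intro x hx
        simp only [Finset.mem_biUnion, id] at hx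
        obtain ⟨t, ht, hxt⟩ := hx
        simp only [Finset.mem_filter, Finset.mem_univ, true_and]
        exact hsub t ht x hxt
      have hRcard : (Finset.univ.filter
          (fun u : Fin n => sS ≤ u.val ∧ u.val < rE)).card = 3 * k + 2 := by
        rw [card_filter_fin_aux n (fun u => sS ≤ u ∧ u < rE)]
        have : (Finset.Iio n).filter (fun u => sS ≤ u ∧ u < rE) = Finset.Ico sS rE := by
          ext u; simp only [Finset.mem_Ico, Finset.mem_Iio, Finset.mem_filter]; omega
        rw [this, Nat.card_Ico]; omega
      have hle := Finset.card_le_card hsubR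
      omega
    | false =>
      have hfil : ∀ t ∈ T, 2 ≤ (t.filter (fun u : Fin n => rE ≤ u.val)).card := by
        intro t ht
        obtain ⟨hcard, hadj, hcol⟩ := hT t ht
        have hnoS : ∀ x ∈ t, sS ≤ x.val := by
          intro x hx
          by_contra h
          obtain ⟨y, hy, z, hz, hyx, hzx, hyz⟩ := three_elems t hcard hx
          have a1 := hadj x hx y hy (Ne.symm hyx)
          have a2 := hadj x hx z hz (Ne.symm hzx)
          have e1 := hcol x hx y hy (Ne.symm hyx)
          have e2 := hcol x hx z hz (Ne.symm hzx)
          have e3 := hcol y hy z hz hyz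
          simp only [besG_adj] at a1 a2
          simp only [besχ, decide_eq_false_iff_not] at e1 e2 e3
          have a1' := a1.2
          have a2' := a2.2
          omega
        have hR1 : (t.filter (fun u : Fin n => ¬ rE ≤ u.val)).card ≤ 1 := by
          rw [Finset.card_le_one]
          intro a ha b hb
          simp only [Finset.mem_filter] at ha hb
          by_contra hab
          have e := hcol a ha.1 b hb.1 hab
          simp only [besχ, decide_eq_false_iff_not] at e
          have hsa := hnoS a ha.1
          have hsb := hnoS b hb.1
          have h1 := ha.2
          have h2 := hb.2
          omega
        have hpn := Finset.card_filter_add_card_filter_not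
          (s := t) (p := fun u : Fin n => rE ≤ u.val)
        omega
      have hdisj2 : ∀ a ∈ T, ∀ b ∈ T, a ≠ b →
          Disjoint (a.filter (fun u : Fin n => rE ≤ u.val))
            (b.filter (fun u : Fin n => rE ≤ u.val)) := fun a ha b hb hab =>
        (hdisj a ha b hb hab).mono (Finset.filter_subset _ _) (Finset.filter_subset _ _)
      have hcard2 : (T.biUnion (fun t => t.filter (fun u : Fin n => rE ≤ u.val))).card =
          ∑ t ∈ T, (t.filter (fun u : Fin n => rE ≤ u.val)).card :=
        Finset.card_biUnion hdisj2
      have hsum2 : 2 * T.card ≤ ∑ t ∈ T, (t.filter (fun u : Fin n => rE ≤ u.val)).card := by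
        calc 2 * T.card = ∑ _t ∈ T, 2 := by simp [mul_comm]
          _ ≤ _ := Finset.sum_le_sum hfil
      have hsubB : T.biUnion (fun t => t.filter (fun u : Fin n => rE ≤ u.val)) ⊆
          Finset.univ.filter (fun u : Fin n => rE ≤ u.val) := by
        intro x hx
        simp only [Finset.mem_biUnion, Finset.mem_filter] at hx
        obtain ⟨t, ht, hxt, hxr⟩ := hx
        simp only [Finset.mem_filter, Finset.mem_univ, true_and]
        exact hxr
      have hBcard : (Finset.univ.filter (fun u : Fin n => rE ≤ u.val)).card = n - rE := by
        rw [card_filter_fin_aux]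
        have : (Finset.Iio n).filter (fun u => rE ≤ u) = Finset.Ico rE n := by
          ext u; simp only [Finset.mem_Ico, Finset.mem_Iio, Finset.mem_filter]; omega
        rw [this, Nat.card_Ico]
      have hle := Finset.card_le_card hsubB
      omega
end

section
/- Let n ≥ 2 and δ = n - 1, so G is a 2-edge-coloured complete graph K_n with n ≥ 8. Then ⌊(2δ - n)/3⌋ = ⌊(n-2)/3⌋, and G contains a K_3-tiling of at least ⌊(n-2)/3⌋ monochromatic triangles; in particular every 2-edge-colouring of K_{3m+2} (m ≥ 2) yields m pairwise vertex-disjoint monochromatic triangles. -/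
/-! ### Bit-level infrastructure -/

def lowIdx (a b : ℕ) : ℕ := (max a b) * (max a b - 1) / 2 + min a b

def eidx8 (a b : ℕ) : ℕ :=
  if max a b < 5 then lowIdx a b
  else if 5 ≤ min a b then 25 + (min a b - 5) + (max a b - 6)
  else 10 + 5 * (max a b - 5) + min a b

lemma lowIdx_symm (a b : ℕ) : lowIdx a b = lowIdx b a := by
  unfold lowIdx; rw [Nat.max_comm a b, Nat.min_comm a b]

lemma eidx8_symm (a b : ℕ) : eidx8 a b = eidx8 b a := by
  unfold eidx8; rw [Nat.max_comm a b, Nat.min_comm a b, lowIdx_symm a b]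

def mm (c m : Nat) : Bool := (Nat.beq (Nat.land c m) m).or (Nat.beq (Nat.land c m) 0)

def maskOf (i1 i2 i3 : ℕ) : ℕ := (1 <<< i1) ||| (1 <<< i2) ||| (1 <<< i3)

def code (v : ℕ) : ℕ := Nat.lor 613 (Nat.lor (Nat.shiftLeft v 10) 234881024)

def allB (f : ℕ → Bool) : ℕ → ℕ → Bool
  | 0, lo => f lo
  | d+1, lo => ((allB f d (2*lo)).and (allB f d (2*lo+1)))

lemma allB_spec (f : ℕ → Bool) : ∀ d lo, allB f d lo = true → ∀ k, k < 2^d → f (2^d*lo + k) = true := by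
  intro d
  induction d with
  | zero => intro lo h k hk; interval_cases k; simpa [allB] using h
  | succ d ih =>
    intro lo h k hk
    rw [allB, Bool.and_eq_true] at h
    have he : 2^(d+1) = 2^d + 2^d := by rw [pow_succ]; omega
    by_cases hc : k < 2^d
    · have := ih (2*lo) h.1 k hc
      have harg : 2^d*(2*lo) + k = 2^(d+1)*lo + k := by rw [he]; ring
      rwa [harg] at this
    · have := ih (2*lo+1) h.2 (k - 2^d) (by omega)
      have harg : 2^d*(2*lo+1) + (k - 2^d) = 2^(d+1)*lo + k := by rw [he] at hk ⊢; ring_nf; omega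
      rwa [harg] at this

def natOfBools : List Bool → ℕ
  | [] => 0
  | b :: l => b.toNat + 2 * natOfBools l

lemma natOfBools_testBit : ∀ (l : List Bool) (k : ℕ), (natOfBools l).testBit k = l.getD k false := by
  intro l
  induction l with
  | nil => intro k; simp [natOfBools]
  | cons b l ih =>
    intro k
    cases k with
    | zero =>
      rw [Nat.testBit_zero]
      cases b <;> simp [natOfBools, Nat.add_mul_mod_self_left]
    | succ k =>
      rw [show natOfBools (b :: l) = b.toNat + 2 * natOfBools l from rfl, Nat.testBit_add_one]
      have hdiv : (b.toNat + 2 * natOfBools l) / 2 = natOfBools l := by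
        cases b <;> simp [natOfBools] <;> omega
      rw [hdiv, ih]
      simp

lemma natOfBools_lt : ∀ l : List Bool, natOfBools l < 2 ^ l.length := by
  intro l
  induction l with
  | nil => simp [natOfBools]
  | cons b l ih =>
    have hb : b.toNat ≤ 1 := Bool.toNat_le b
    simp only [natOfBools, List.length_cons, pow_succ]
    omega

def vOf (f : ℕ → Bool) (len : ℕ) : ℕ := natOfBools ((List.range len).map f)

lemma vOf_testBit (f : ℕ → Bool) (len k : ℕ) (h : k < len) : (vOf f len).testBit k = f k := by
  rw [vOf, natOfBools_testBit]
  rw [List.getD_eq_getElem _ _ (by simpa using h)]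
  simp

lemma vOf_lt (f : ℕ → Bool) (len : ℕ) : vOf f len < 2 ^ len := by
  have := natOfBools_lt ((List.range len).map f)
  simpa [vOf] using this

lemma code_low (v k : ℕ) (hk : k < 10) : (code v).testBit k = (613 : ℕ).testBit k := by
  have h1 : ¬ 10 ≤ k := by omega
  have h2 : (234881024 : ℕ) = 7 <<< 25 := by decide
  have h3 : ¬ 25 ≤ k := by omega
  show ((613 : ℕ) ||| (v <<< 10 ||| 234881024)).testBit k = _
  rw [h2, Nat.testBit_lor, Nat.testBit_lor, Nat.testBit_shiftLeft, Nat.testBit_shiftLeft]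
  simp [h1, h3]

lemma code_mid (v k : ℕ) (hk : k < 15) : (code v).testBit (10 + k) = v.testBit k := by
  have h2 : (234881024 : ℕ) = 7 <<< 25 := by decide
  have h613 : (613 : ℕ).testBit (10 + k) = false := by
    apply Nat.testBit_lt_two_pow
    calc (613 : ℕ) < 2 ^ 10 := by norm_num
    _ ≤ 2 ^ (10 + k) := Nat.pow_le_pow_right (by norm_num) (by omega)
  have h7 : ¬ 25 ≤ 10 + k := by omega
  show ((613 : ℕ) ||| (v <<< 10 ||| 234881024)).testBit (10 + k) = _
  rw [h2, Nat.testBit_lor, Nat.testBit_lor, Nat.testBit_shiftLeft, Nat.testBit_shiftLeft, h613]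
  simp [h7]

lemma code_high (v k : ℕ) (hv : v < 32768) (hk1 : 25 ≤ k) (hk2 : k < 28) :
    (code v).testBit k = true := by
  have h2 : (234881024 : ℕ) = 7 <<< 25 := by decide
  have h7 : (7 : ℕ).testBit (k - 25) = true := by
    have : k - 25 = 0 ∨ k - 25 = 1 ∨ k - 25 = 2 := by omega
    rcases this with h | h | h <;> rw [h] <;> rfl
  show ((613 : ℕ) ||| (v <<< 10 ||| 234881024)).testBit k = _
  rw [h2, Nat.testBit_lor, Nat.testBit_lor, Nat.testBit_shiftLeft, Nat.testBit_shiftLeft]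
  simp [hk1, h7, Nat.le_of_lt]

/-! ### Generic triangle lemmas -/

lemma mk_inj {n p q : ℕ} {hp : p < n} {hq : q < n} (h : (⟨p, hp⟩ : Fin n) = ⟨q, hq⟩) :
    p = q := congrArg Fin.val h

lemma mono_congr {n : ℕ} {χ1 χ2 : Fin n → Fin n → Bool}
    (h : ∀ x y, x ≠ y → χ1 x y = χ2 x y) {t : Finset (Fin n)}
    (hm : IsMonoTri χ1 t) : IsMonoTri χ2 t := by
  obtain ⟨hc, c, hmono⟩ := hm
  exact ⟨hc, c, fun x hx y hy hxy => (h x y hxy) ▸ hmono x hx y hy hxy⟩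

lemma mono_map {a b : ℕ} (g : Fin a ↪ Fin b) {χ : Fin b → Fin b → Bool} {t : Finset (Fin a)}
    (h : IsMonoTri (fun x y => χ (g x) (g y)) t) : IsMonoTri χ (t.map g) := by
  obtain ⟨hc, c, hm⟩ := h
  refine ⟨by rw [Finset.card_map]; exact hc, c, ?_⟩
  intro x hx y hy hxy
  rw [Finset.mem_map] at hx hy
  obtain ⟨x0, hx0, rfl⟩ := hx
  obtain ⟨y0, hy0, rfl⟩ := hy
  exact hm x0 hx0 y0 hy0 (by rintro rfl; exact hxy rfl)

lemma flip_mono {n : ℕ} {χ : Fin n → Fin n → Bool} (b0 : Bool) {u : Finset (Fin n)}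
    (h : IsMonoTri (fun a b => χ a b == b0) u) : IsMonoTri χ u := by
  obtain ⟨hc, c, hm⟩ := h
  refine ⟨hc, b0 == c, fun x hx y hy hne => ?_⟩
  have := hm x hx y hy hne
  revert this
  cases hv : χ x y <;> cases b0 <;> cases c <;> simp_all

lemma bridge {n : ℕ} (ι : ℕ → ℕ → ℕ) (hsym : ∀ a b, ι a b = ι b a) (c : ℕ) (x y z : Fin n)
    (hxy : x ≠ y) (hxz : x ≠ z) (hyz : y ≠ z)
    (h : mm c (maskOf (ι x.1 y.1) (ι x.1 z.1) (ι y.1 z.1)) = true) :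
    IsMonoTri (fun a b => c.testBit (ι a.1 b.1)) ({x, y, z} : Finset (Fin n)) := by
  have hcard : ({x, y, z} : Finset (Fin n)).card = 3 := by
    rw [Finset.card_insert_of_notMem (by simp [hxy, hxz]),
      Finset.card_insert_of_notMem (by simp [hyz]), Finset.card_singleton]
  set m := maskOf (ι x.1 y.1) (ι x.1 z.1) (ι y.1 z.1) with hm
  have h' : c &&& m = m ∨ c &&& m = 0 := by
    rw [mm, Bool.or_eq_true, Nat.beq_eq, Nat.beq_eq] at h
    exact h
  have hself : ∀ e ∈ [ι x.1 y.1, ι x.1 z.1, ι y.1 z.1], m.testBit e = true := by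
    intro e he
    fin_cases he <;>
      simp [hm, maskOf, Nat.testBit_lor, Nat.one_shiftLeft, Nat.testBit_two_pow_self]
  have key : ∃ w : Bool, ∀ e, m.testBit e = true → c.testBit e = w := by
    rcases h' with h1 | h1
    · refine ⟨true, fun e he => ?_⟩
      have h2 := congrArg (Nat.testBit · e) h1
      simp only [Nat.testBit_land, he, Bool.and_true] at h2
      exact h2
    · refine ⟨false, fun e he => ?_⟩
      have h2 := congrArg (Nat.testBit · e) h1
      simp only [Nat.testBit_land, he, Bool.and_true, Nat.zero_testBit] at h2
      exact h2
  obtain ⟨w, hw⟩ := key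
  have hw' : ∀ e ∈ [ι x.1 y.1, ι x.1 z.1, ι y.1 z.1], c.testBit e = w :=
    fun e he => hw e (hself e he)
  refine ⟨hcard, w, ?_⟩
  intro a ha b hb hne
  show c.testBit (ι a.1 b.1) = w
  simp only [Finset.mem_insert, Finset.mem_singleton] at ha hb
  rcases ha with rfl | rfl | rfl <;> rcases hb with rfl | rfl | rfl <;>
    first
      | exact absurd rfl hne
      | exact hw' _ (List.mem_cons_self)
      | exact hw' _ (List.mem_cons_of_mem _ (List.mem_cons_self))
      | exact hw' _ (List.mem_cons_of_mem _ (List.mem_cons_of_mem _ (List.mem_cons_self)))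
      | (rw [hsym]
         first
          | exact hw' _ (List.mem_cons_self)
          | exact hw' _ (List.mem_cons_of_mem _ (List.mem_cons_self))
          | exact hw' _ (List.mem_cons_of_mem _ (List.mem_cons_of_mem _ (List.mem_cons_self))))
def pairList : List ((Nat × Nat × Nat) × (Nat × Nat × Nat) × Nat × Nat) := [
  ((0,1,5), (2,3,6), 3073, 393248),
  ((0,1,5), (2,4,6), 3073, 655616),
  ((0,2,5), (1,3,6), 5122, 327696),
  ((0,2,5), (1,6,7), 5122, 136380416),
  ((0,3,6), (2,5,7), 294920, 71307264),
  ((0,4,6), (2,3,5), 557120, 12320),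
  ((0,2,7), (1,3,5), 5242882, 10256),
  ((0,6,7), (1,3,5), 135299072, 10256),
  ((1,4,6), (2,3,5), 589952, 12320),
  ((0,2,5), (1,3,7), 5122, 10485776),
  ((0,2,5), (3,6,7), 5122, 142868480),
  ((0,1,5), (4,6,7), 3073, 151519232),
  ((0,3,6), (2,4,7), 294920, 20971776),
  ((2,5,7), (3,4,6), 71307264, 786944),
  ((0,1,6), (3,5,7), 98305, 75505664),
  ((0,2,6), (1,4,5), 163842, 18560),
  ((0,4,5), (2,6,7), 17472, 138543104),
  ((1,4,5), (2,3,6), 18560, 393248),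
  ((0,6,7), (1,2,5), 135299072, 6148),
  ((0,2,6), (4,5,7), 163842, 83902464),
  ((0,3,7), (1,2,5), 9437192, 6148),
  ((0,5,6), (1,4,7), 33588224, 18874496),
  ((1,2,5), (3,6,7), 6148, 142868480),
  ((0,3,6), (2,4,5), 294920, 20736),
  ((0,5,6), (1,2,7), 33588224, 6291460),
  ((2,4,7), (3,5,6), 20971776, 33824768),
  ((1,2,6), (4,5,7), 196612, 83902464),
  ((0,3,5), (1,4,6), 9224, 589952),
  ((0,4,5), (1,3,6), 17472, 327696),
  ((1,5,7), (3,4,6), 69208064, 786944),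
  ((0,1,6), (2,5,7), 98305, 71307264),
  ((0,2,6), (1,4,7), 163842, 18874496),
  ((0,4,7), (2,5,6), 17825856, 33689600),
  ((0,6,7), (2,4,5), 135299072, 20736),
  ((0,4,5), (1,6,7), 17472, 136380416),
  ((0,3,7), (1,4,5), 9437192, 18560),
  ((0,2,7), (1,5,6), 5242882, 33622016),
  ((2,3,6), (4,5,7), 393248, 83902464),
  ((0,2,7), (1,3,6), 5242882, 327696),
  ((0,4,6), (2,3,7), 557120, 12582944),
  ((1,2,7), (3,5,6), 6291460, 33824768),
  ((1,3,5), (2,4,7), 10256, 20971776),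
  ((0,5,6), (1,3,7), 33588224, 10485776),
  ((0,3,5), (1,4,7), 9224, 18874496),
  ((0,4,7), (1,2,5), 17825856, 6148),
  ((0,5,6), (3,4,7), 33588224, 25166336),
  ((0,1,6), (2,3,5), 98305, 12320),
  ((0,3,5), (1,2,7), 9224, 6291460),
  ((1,2,6), (3,5,7), 196612, 75505664),
  ((0,2,6), (1,3,5), 163842, 10256),
  ((0,2,5), (1,4,6), 5122, 589952),
  ((0,1,6), (3,4,7), 98305, 25166336),
  ((1,3,7), (2,5,6), 10485776, 33689600),
  ((0,3,5), (1,6,7), 9224, 136380416),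
  ((0,1,7), (3,4,5), 3145729, 25088),
  ((0,2,7), (3,4,5), 5242882, 25088),
  ((0,3,5), (4,6,7), 9224, 151519232)]

def triList6 : List ((Nat × Nat × Nat) × Nat) := [
  ((0,1,2), 7),
  ((0,1,3), 25),
  ((0,2,3), 42),
  ((1,2,3), 52),
  ((0,1,4), 193),
  ((0,2,4), 322),
  ((0,3,4), 584),
  ((1,2,4), 388),
  ((1,3,4), 656),
  ((2,3,4), 800),
  ((0,1,5), 3073),
  ((0,2,5), 5122),
  ((0,3,5), 9224),
  ((0,4,5), 17472),
  ((1,2,5), 6148),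
  ((1,3,5), 10256),
  ((1,4,5), 18560),
  ((2,3,5), 12320),
  ((2,4,5), 20736)]

def triList5 : List ((Nat × Nat × Nat) × Nat) := [
  ((0,1,2), 7),
  ((0,1,3), 25),
  ((0,1,4), 193),
  ((0,2,3), 42),
  ((0,2,4), 322),
  ((0,3,4), 584),
  ((1,2,3), 52),
  ((1,2,4), 388),
  ((1,3,4), 656),
  ((2,3,4), 800)]

def permList : List (Nat × Nat × Nat × Nat × Nat) := [
  (0,1,2,3,4),
  (0,1,2,4,3),
  (0,1,3,2,4),
  (0,1,3,4,2),
  (0,1,4,2,3),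
  (0,1,4,3,2),
  (0,2,1,3,4),
  (0,2,1,4,3),
  (0,2,3,1,4),
  (0,2,3,4,1),
  (0,2,4,1,3),
  (0,2,4,3,1),
  (0,3,1,2,4),
  (0,3,1,4,2),
  (0,3,2,1,4),
  (0,3,2,4,1),
  (0,3,4,1,2),
  (0,3,4,2,1),
  (0,4,1,2,3),
  (0,4,1,3,2),
  (0,4,2,1,3),
  (0,4,2,3,1),
  (0,4,3,1,2),
  (0,4,3,2,1),
  (1,0,2,3,4),
  (1,0,2,4,3),
  (1,0,3,2,4),
  (1,0,3,4,2),
  (1,0,4,2,3),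
  (1,0,4,3,2),
  (1,2,0,3,4),
  (1,2,0,4,3),
  (1,2,3,0,4),
  (1,2,3,4,0),
  (1,2,4,0,3),
  (1,2,4,3,0),
  (1,3,0,2,4),
  (1,3,0,4,2),
  (1,3,2,0,4),
  (1,3,2,4,0),
  (1,3,4,0,2),
  (1,3,4,2,0),
  (1,4,0,2,3),
  (1,4,0,3,2),
  (1,4,2,0,3),
  (1,4,2,3,0),
  (1,4,3,0,2),
  (1,4,3,2,0),
  (2,0,1,3,4),
  (2,0,1,4,3),
  (2,0,3,1,4),
  (2,0,3,4,1),
  (2,0,4,1,3),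
  (2,0,4,3,1),
  (2,1,0,3,4),
  (2,1,0,4,3),
  (2,1,3,0,4),
  (2,1,3,4,0),
  (2,1,4,0,3),
  (2,1,4,3,0),
  (2,3,0,1,4),
  (2,3,0,4,1),
  (2,3,1,0,4),
  (2,3,1,4,0),
  (2,3,4,0,1),
  (2,3,4,1,0),
  (2,4,0,1,3),
  (2,4,0,3,1),
  (2,4,1,0,3),
  (2,4,1,3,0),
  (2,4,3,0,1),
  (2,4,3,1,0),
  (3,0,1,2,4),
  (3,0,1,4,2),
  (3,0,2,1,4),
  (3,0,2,4,1),
  (3,0,4,1,2),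
  (3,0,4,2,1),
  (3,1,0,2,4),
  (3,1,0,4,2),
  (3,1,2,0,4),
  (3,1,2,4,0),
  (3,1,4,0,2),
  (3,1,4,2,0),
  (3,2,0,1,4),
  (3,2,0,4,1),
  (3,2,1,0,4),
  (3,2,1,4,0),
  (3,2,4,0,1),
  (3,2,4,1,0),
  (3,4,0,1,2),
  (3,4,0,2,1),
  (3,4,1,0,2),
  (3,4,1,2,0),
  (3,4,2,0,1),
  (3,4,2,1,0),
  (4,0,1,2,3),
  (4,0,1,3,2),
  (4,0,2,1,3),
  (4,0,2,3,1),
  (4,0,3,1,2),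
  (4,0,3,2,1),
  (4,1,0,2,3),
  (4,1,0,3,2),
  (4,1,2,0,3),
  (4,1,2,3,0),
  (4,1,3,0,2),
  (4,1,3,2,0),
  (4,2,0,1,3),
  (4,2,0,3,1),
  (4,2,1,0,3),
  (4,2,1,3,0),
  (4,2,3,0,1),
  (4,2,3,1,0),
  (4,3,0,1,2),
  (4,3,0,2,1),
  (4,3,1,0,2),
  (4,3,1,2,0),
  (4,3,2,0,1),
  (4,3,2,1,0)]

def pentB (i j : ℕ) : Bool := ((i+1) % 5 == j) || ((j+1) % 5 == i)

def pentCond (v : ℕ) : ℕ × ℕ × ℕ × ℕ × ℕ → Bool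
  | (a,b,c,d,e) =>
    v.testBit (lowIdx a b) && v.testBit (lowIdx b c) && v.testBit (lowIdx c d) &&
    v.testBit (lowIdx d e) && v.testBit (lowIdx e a) &&
    !v.testBit (lowIdx a c) && !v.testBit (lowIdx a d) && !v.testBit (lowIdx b d) &&
    !v.testBit (lowIdx b e) && !v.testBit (lowIdx c e)

def ok5 (v : ℕ) : Bool :=
  (triList5.any fun p => mm v p.2).or (permList.any fun s => pentCond v s)

lemma ok5_all : allB ok5 10 0 = true := by decide

def pairs6 : List (Fin 6 × Fin 6) :=
  [(0,1),(0,2),(1,2),(0,3),(1,3),(2,3),(0,4),(1,4),(2,4),(3,4),(0,5),(1,5),(2,5),(3,5),(4,5)]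
def d6 (k : ℕ) : Fin 6 × Fin 6 := pairs6.getD k (0,0)

lemma round6 : ∀ i j : Fin 6, i ≠ j → lowIdx i.1 j.1 < 15 ∧
    (d6 (lowIdx i.1 j.1) = (i,j) ∨ d6 (lowIdx i.1 j.1) = (j,i)) := by decide

def d5 (k : ℕ) : Fin 5 × Fin 5 := pairs5.getD k (0,0)

lemma round5 : ∀ i j : Fin 5, i ≠ j → lowIdx i.1 j.1 < 10 ∧
    (d5 (lowIdx i.1 j.1) = (i,j) ∨ d5 (lowIdx i.1 j.1) = (j,i)) := by decide

abbrev t6OK (p : (ℕ × ℕ × ℕ) × ℕ) : Prop :=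
  p.1.1 < 6 ∧ p.1.2.1 < 6 ∧ p.1.2.2 < 6 ∧ p.1.1 ≠ p.1.2.1 ∧ p.1.1 ≠ p.1.2.2 ∧ p.1.2.1 ≠ p.1.2.2 ∧
    p.2 = maskOf (lowIdx p.1.1 p.1.2.1) (lowIdx p.1.1 p.1.2.2) (lowIdx p.1.2.1 p.1.2.2)

lemma tri6_ok : ∀ p ∈ triList6, t6OK p := by decide

abbrev t5OK (p : (ℕ × ℕ × ℕ) × ℕ) : Prop :=
  p.1.1 < 5 ∧ p.1.2.1 < 5 ∧ p.1.2.2 < 5 ∧ p.1.1 ≠ p.1.2.1 ∧ p.1.1 ≠ p.1.2.2 ∧ p.1.2.1 ≠ p.1.2.2 ∧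
    p.2 = maskOf (lowIdx p.1.1 p.1.2.1) (lowIdx p.1.1 p.1.2.2) (lowIdx p.1.2.1 p.1.2.2)

lemma tri5_ok : ∀ p ∈ triList5, t5OK p := by decide

abbrev pOK (q : (ℕ × ℕ × ℕ) × (ℕ × ℕ × ℕ) × ℕ × ℕ) : Prop :=
  let x := q.1.1; let y := q.1.2.1; let z := q.1.2.2
  let a := q.2.1.1; let b := q.2.1.2.1; let c := q.2.1.2.2
  x < 8 ∧ y < 8 ∧ z < 8 ∧ a < 8 ∧ b < 8 ∧ c < 8 ∧
    x ≠ y ∧ x ≠ z ∧ y ≠ z ∧ a ≠ b ∧ a ≠ c ∧ b ≠ c ∧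
    x ≠ a ∧ x ≠ b ∧ x ≠ c ∧ y ≠ a ∧ y ≠ b ∧ y ≠ c ∧ z ≠ a ∧ z ≠ b ∧ z ≠ c ∧
    q.2.2.1 = maskOf (eidx8 x y) (eidx8 x z) (eidx8 y z) ∧
    q.2.2.2 = maskOf (eidx8 a b) (eidx8 a c) (eidx8 b c)

lemma pairList_ok : ∀ p ∈ pairList, pOK p := by decide

abbrev pmOK (s : ℕ × ℕ × ℕ × ℕ × ℕ) : Prop :=
  let a := s.1; let b := s.2.1; let c := s.2.2.1; let d := s.2.2.2.1; let e := s.2.2.2.2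
  a < 5 ∧ b < 5 ∧ c < 5 ∧ d < 5 ∧ e < 5 ∧
    a ≠ b ∧ a ≠ c ∧ a ≠ d ∧ a ≠ e ∧ b ≠ c ∧ b ≠ d ∧ b ≠ e ∧ c ≠ d ∧ c ≠ e ∧ d ≠ e

set_option maxRecDepth 40000 in
lemma permList_ok : ∀ s ∈ permList, pmOK s := by decide

lemma factA : ∀ a b : Fin 8, a.1 < 5 → b.1 < 5 → a ≠ b →
    eidx8 a.1 b.1 < 10 ∧ eidx8 a.1 b.1 = lowIdx a.1 b.1 ∧
    (613 : ℕ).testBit (lowIdx a.1 b.1) = pentB a.1 b.1 := by decide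

lemma factB : ∀ a b : Fin 8, 5 ≤ a.1 → 5 ≤ b.1 → a ≠ b →
    25 ≤ eidx8 a.1 b.1 ∧ eidx8 a.1 b.1 < 28 := by decide

lemma factC : ∀ a b : Fin 8, a.1 < 5 → 5 ≤ b.1 →
    eidx8 a.1 b.1 = 10 + (5*(b.1-5)+a.1) ∧ 5*(b.1-5)+a.1 < 15 ∧
    (5*(b.1-5)+a.1) % 5 = a.1 ∧ 5 + ((5*(b.1-5)+a.1)/5) % 3 = b.1 := by decide
def okB (v : Nat) : Bool :=
  let c := Nat.lor 613 (Nat.lor (Nat.shiftLeft v 10) 234881024)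
  (((mm c 3073).and (mm c 393248)).or
  (((mm c 3073).and (mm c 655616)).or
  (((mm c 5122).and (mm c 327696)).or
  (((mm c 5122).and (mm c 136380416)).or
  (((mm c 294920).and (mm c 71307264)).or
  (((mm c 557120).and (mm c 12320)).or
  (((mm c 5242882).and (mm c 10256)).or
  (((mm c 135299072).and (mm c 10256)).or
  (((mm c 589952).and (mm c 12320)).or
  (((mm c 5122).and (mm c 10485776)).or
  (((mm c 5122).and (mm c 142868480)).or
  (((mm c 3073).and (mm c 151519232)).or
  (((mm c 294920).and (mm c 20971776)).or
  (((mm c 71307264).and (mm c 786944)).or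
  (((mm c 98305).and (mm c 75505664)).or
  (((mm c 163842).and (mm c 18560)).or
  (((mm c 17472).and (mm c 138543104)).or
  (((mm c 18560).and (mm c 393248)).or
  (((mm c 135299072).and (mm c 6148)).or
  (((mm c 163842).and (mm c 83902464)).or
  (((mm c 9437192).and (mm c 6148)).or
  (((mm c 33588224).and (mm c 18874496)).or
  (((mm c 6148).and (mm c 142868480)).or
  (((mm c 294920).and (mm c 20736)).or
  (((mm c 33588224).and (mm c 6291460)).or
  (((mm c 20971776).and (mm c 33824768)).or
  (((mm c 196612).and (mm c 83902464)).or
  (((mm c 9224).and (mm c 589952)).or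
  (((mm c 17472).and (mm c 327696)).or
  (((mm c 69208064).and (mm c 786944)).or
  (((mm c 98305).and (mm c 71307264)).or
  (((mm c 163842).and (mm c 18874496)).or
  (((mm c 17825856).and (mm c 33689600)).or
  (((mm c 135299072).and (mm c 20736)).or
  (((mm c 17472).and (mm c 136380416)).or
  (((mm c 9437192).and (mm c 18560)).or
  (((mm c 5242882).and (mm c 33622016)).or
  (((mm c 393248).and (mm c 83902464)).or
  (((mm c 5242882).and (mm c 327696)).or
  (((mm c 557120).and (mm c 12582944)).or
  (((mm c 6291460).and (mm c 33824768)).or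
  (((mm c 10256).and (mm c 20971776)).or
  (((mm c 33588224).and (mm c 10485776)).or
  (((mm c 9224).and (mm c 18874496)).or
  (((mm c 17825856).and (mm c 6148)).or
  (((mm c 33588224).and (mm c 25166336)).or
  (((mm c 98305).and (mm c 12320)).or
  (((mm c 9224).and (mm c 6291460)).or
  (((mm c 196612).and (mm c 75505664)).or
  (((mm c 163842).and (mm c 10256)).or
  (((mm c 5122).and (mm c 589952)).or
  (((mm c 98305).and (mm c 25166336)).or
  (((mm c 10485776).and (mm c 33689600)).or
  (((mm c 9224).and (mm c 136380416)).or
  (((mm c 3145729).and (mm c 25088)).or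
  (((mm c 5242882).and (mm c 25088)).or
  (((mm c 9224).and (mm c 151519232)).or
  false)))))))))))))))))))))))))))))))))))))))))))))))))))))))))

def ok6 (v : Nat) : Bool :=
  ((mm v 7).or
  ((mm v 25).or
  ((mm v 42).or
  ((mm v 52).or
  ((mm v 193).or
  ((mm v 322).or
  ((mm v 584).or
  ((mm v 388).or
  ((mm v 656).or
  ((mm v 800).or
  ((mm v 3073).or
  ((mm v 5122).or
  ((mm v 9224).or
  ((mm v 17472).or
  ((mm v 6148).or
  ((mm v 10256).or
  ((mm v 18560).or
  ((mm v 12320).or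
  ((mm v 20736).or
  false)))))))))))))))))))

set_option maxHeartbeats 40000000 in
lemma okB_all : allB okB 15 0 = true := by decide

set_option maxHeartbeats 8000000 in
lemma ok6_all : allB ok6 15 0 = true := by decide

lemma ok6_eq (v : ℕ) : ok6 v = triList6.any (fun p => mm v p.2) := rfl

lemma okB_eq (v : ℕ) : okB v = pairList.any (fun p => (mm (code v) p.2.2.1).and (mm (code v) p.2.2.2)) := rfl

/-! ### Ramsey for 6 vertices -/

lemma ramsey {n : ℕ} (h6 : 6 ≤ n) (χ : Fin n → Fin n → Bool) (hs : ∀ a b, χ a b = χ b a) :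
    ∃ t : Finset (Fin n), IsMonoTri χ t := by
  have hemb : Function.Injective (fun i : Fin 6 => (⟨i.1, lt_of_lt_of_le i.2 h6⟩ : Fin n)) := by
    intro i j hij
    simp only [Fin.mk.injEq] at hij
    exact Fin.ext hij
  set emb : Fin 6 ↪ Fin n := ⟨fun i => ⟨i.1, lt_of_lt_of_le i.2 h6⟩, hemb⟩ with hembdef
  set f6 : ℕ → Bool := fun k => χ (emb (d6 k).1) (emb (d6 k).2) with hf6
  set v6 := vOf f6 15 with hv6
  have hok : ok6 v6 = true := by
    have h1 := allB_spec ok6 15 0 ok6_all v6 (by simpa using vOf_lt f6 15)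
    simpa using h1
  rw [ok6_eq] at hok
  obtain ⟨p, hp, hmono⟩ := List.any_eq_true.mp hok
  have htl6 := tri6_ok _ hp
  obtain ⟨⟨x, y, z⟩, m⟩ := p
  obtain ⟨hx6', hy6', hz6', hxy', hxz', hyz', hmask'⟩ := htl6
  have hx6 : x < 6 := hx6'
  have hy6 : y < 6 := hy6'
  have hz6 : z < 6 := hz6'
  have hxy : x ≠ y := hxy'
  have hxz : x ≠ z := hxz'
  have hyz : y ≠ z := hyz'
  have hmask : m = maskOf (lowIdx x y) (lowIdx x z) (lowIdx y z) := hmask'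
  have hagree : ∀ i j : Fin 6, i ≠ j → v6.testBit (lowIdx i.1 j.1) = χ (emb i) (emb j) := by
    intro i j hij
    obtain ⟨hlt, hd⟩ := round6 i j hij
    rw [hv6, vOf_testBit f6 15 _ hlt, hf6]
    rcases hd with hd | hd <;> simp only [hd]
    exact hs _ _
  have hbr := bridge lowIdx lowIdx_symm v6 (⟨x, hx6⟩ : Fin 6) ⟨y, hy6⟩ ⟨z, hz6⟩
    (by simp [Fin.ext_iff]; exact hxy) (by simp [Fin.ext_iff]; exact hxz)
    (by simp [Fin.ext_iff]; exact hyz) (hmask ▸ hmono)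
  have h2 := mono_congr (fun i j hij => hagree i j hij) hbr
  exact ⟨_, mono_map emb h2⟩

/-! ### The K8 base case -/

set_option maxHeartbeats 2000000 in
lemma L8 (χ : Fin 8 → Fin 8 → Bool) (hs : ∀ a b, χ a b = χ b a) :
    ∃ t1 t2 : Finset (Fin 8), Disjoint t1 t2 ∧ IsMonoTri χ t1 ∧ IsMonoTri χ t2 := by
  obtain ⟨t, ht⟩ := ramsey (by norm_num) χ hs
  obtain ⟨hcard, b0, hb0⟩ := ht
  set χ₁ : Fin 8 → Fin 8 → Bool := fun a b => χ a b == b0 with hχ₁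
  have hs₁ : ∀ a b, χ₁ a b = χ₁ b a := fun a b => by simp only [hχ₁, hs a b]
  have htt : ∀ x ∈ t, ∀ y ∈ t, x ≠ y → χ₁ x y = true := by
    intro x hx y hy hne
    simp only [hχ₁, hb0 x hx y hy hne, beq_self_eq_true]
  by_cases hcase : ∃ u : Finset (Fin 8), u ⊆ tᶜ ∧ IsMonoTri χ₁ u
  · obtain ⟨u, hsub, hu⟩ := hcase
    exact ⟨t, u, disjoint_compl_right.mono_right hsub, ⟨hcard, b0, hb0⟩, flip_mono b0 hu⟩
  · have h5 : tᶜ.card = 5 := by rw [Finset.card_compl, hcard, Fintype.card_fin]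
    set e0 := tᶜ.orderIsoOfFin h5 with he0
    have heinj : Function.Injective (fun i : Fin 5 => (e0 i : Fin 8)) := by
      intro i j hij
      exact e0.injective (Subtype.ext hij)
    set eEmb : Fin 5 ↪ Fin 8 := ⟨fun i => (e0 i : Fin 8), heinj⟩ with heEmb
    have heMem : ∀ i, eEmb i ∈ tᶜ := fun i => (e0 i).2
    set f5 : ℕ → Bool := fun k => χ₁ (eEmb (d5 k).1) (eEmb (d5 k).2) with hf5
    set v5 := vOf f5 10 with hv5
    have hagree5 : ∀ i j : Fin 5, i ≠ j → v5.testBit (lowIdx i.1 j.1) = χ₁ (eEmb i) (eEmb j) := by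
      intro i j hij
      obtain ⟨hlt, hd⟩ := round5 i j hij
      rw [hv5, vOf_testBit f5 10 _ hlt]
      simp only [hf5]
      rcases hd with hd | hd <;> simp only [hd]
      exact hs₁ _ _
    have hok5 : ok5 v5 = true := by
      have h1 := allB_spec ok5 10 0 ok5_all v5 (by simpa using vOf_lt f5 10)
      simpa using h1
    have hnm : (triList5.any fun p => mm v5 p.2) = false := by
      rw [Bool.eq_false_iff]
      intro hx
      obtain ⟨p, hp, hmono⟩ := List.any_eq_true.mp hx
      have htl := tri5_ok _ hp
      obtain ⟨⟨x, y, z⟩, m⟩ := p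
      obtain ⟨hx5', hy5', hz5', hxy', hxz', hyz', hmask'⟩ := htl
      have hx5 : x < 5 := hx5'
      have hy5 : y < 5 := hy5'
      have hz5 : z < 5 := hz5'
      have hxy : x ≠ y := hxy'
      have hxz : x ≠ z := hxz'
      have hyz : y ≠ z := hyz'
      have hmask : m = maskOf (lowIdx x y) (lowIdx x z) (lowIdx y z) := hmask'
      have hbr := bridge lowIdx lowIdx_symm v5 (⟨x,hx5⟩ : Fin 5) ⟨y,hy5⟩ ⟨z,hz5⟩
        (fun hh => hxy (congrArg Fin.val hh)) (fun hh => hxz (congrArg Fin.val hh))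
        (fun hh => hyz (congrArg Fin.val hh)) (hmask ▸ hmono)
      have h2 := mono_congr (fun i j hij => hagree5 i j hij) hbr
      have h3 := mono_map eEmb h2
      refine hcase ⟨_, ?_, h3⟩
      intro w hw
      rw [Finset.mem_map] at hw
      obtain ⟨i, _, rfl⟩ := hw
      exact heMem i
    have hperm : (permList.any fun s => pentCond v5 s) = true := by
      rw [ok5, hnm] at hok5
      simpa using hok5
    obtain ⟨sq, hsqmem, hsqcond⟩ := List.any_eq_true.mp hperm
    have hpm := permList_ok _ hsqmem
    obtain ⟨a, b, c, d, e⟩ := sq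
    obtain ⟨w1, w2, w3, w4, w5, w6, w7, w8, w9, w10, w11, w12, w13, w14, w15⟩ := hpm
    have ha5 : a < 5 := w1
    have hb5 : b < 5 := w2
    have hc5 : c < 5 := w3
    have hd5' : d < 5 := w4
    have he5' : e < 5 := w5
    have hab : a ≠ b := w6
    have hac : a ≠ c := w7
    have had : a ≠ d := w8
    have hae : a ≠ e := w9
    have hbc : b ≠ c := w10
    have hbd : b ≠ d := w11
    have hbe : b ≠ e := w12
    have hcd : c ≠ d := w13
    have hce : c ≠ e := w14
    have hde : d ≠ e := w15
    simp only [pentCond, Bool.and_eq_true, Bool.not_eq_true'] at hsqcond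
    obtain ⟨⟨⟨⟨⟨⟨⟨⟨⟨hE1,hE2⟩,hE3⟩,hE4⟩,hE5⟩,hE6⟩,hE7⟩,hE8⟩,hE9⟩,hE10⟩ := hsqcond
    set sval : ℕ → ℕ := fun k =>
      if k = 0 then a else if k = 1 then b else if k = 2 then c else if k = 3 then d else e
      with hsval
    have hsval5 : ∀ k, sval k < 5 := by
      intro k
      simp only [hsval]
      split_ifs <;> assumption
    set σ : Fin 5 → Fin 5 := fun i => ⟨sval i.1, hsval5 i.1⟩ with hσ
    have hsvinj : ∀ k l : ℕ, k < 5 → l < 5 → k ≠ l → sval k ≠ sval l := by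
      intro k l hk hl hne
      interval_cases k <;> interval_cases l <;> simp only [hsval] <;> norm_num <;> omega
    have hσinj : ∀ i j : Fin 5, i ≠ j → σ i ≠ σ j := by
      intro i j hij hc
      simp only [hσ, Fin.mk.injEq] at hc
      exact hsvinj i.1 j.1 i.isLt j.isLt (fun hh => hij (Fin.ext hh)) hc
    have hpent : ∀ k l : ℕ, k < 5 → l < 5 → k ≠ l →
        v5.testBit (lowIdx (sval k) (sval l)) = pentB k l := by
      intro k l hk hl hne
      interval_cases k <;> interval_cases l <;>
        simp only [hsval, pentB] <;> norm_num <;>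
        first
          | exact absurd rfl hne
          | exact hE1 | exact hE2 | exact hE3 | exact hE4 | exact hE5 | exact hE6 | exact hE7 | exact hE8 | exact hE9 | exact hE10
          | (rw [lowIdx_symm]
             first | exact hE1 | exact hE2 | exact hE3 | exact hE4 | exact hE5 | exact hE6 | exact hE7 | exact hE8 | exact hE9 | exact hE10)
    set f0 := t.orderIsoOfFin hcard with hf0
    have hfinj : Function.Injective (fun i : Fin 3 => (f0 i : Fin 8)) := by
      intro i j hij
      exact f0.injective (Subtype.ext hij)
    set fEmb : Fin 3 ↪ Fin 8 := ⟨fun i => (f0 i : Fin 8), hfinj⟩ with hfEmb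
    have hfMem : ∀ i, fEmb i ∈ t := fun i => (f0 i).2
    set h8 : Fin 8 → Fin 8 := fun i =>
      if h : i.1 < 5 then eEmb (σ ⟨i.1, h⟩) else fEmb ⟨i.1 - 5, by omega⟩ with hh8
    have h8low : ∀ (i : Fin 8) (h : i.1 < 5), h8 i = eEmb (σ ⟨i.1, h⟩) := by
      intro i h
      simp only [hh8]
      rw [dif_pos h]
    have h8high : ∀ (i : Fin 8) (h : ¬ i.1 < 5), h8 i = fEmb ⟨i.1 - 5, by omega⟩ := by
      intro i h
      simp only [hh8]
      rw [dif_neg h]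
    have h8inj : Function.Injective h8 := by
      intro i j hij
      by_cases hi : i.1 < 5 <;> by_cases hj : j.1 < 5
      · rw [h8low i hi, h8low j hj] at hij
        by_contra hne
        exact hσinj ⟨i.1, hi⟩ ⟨j.1, hj⟩
          (fun hh => hne (Fin.ext (mk_inj hh))) (eEmb.injective hij)
      · rw [h8low i hi, h8high j hj] at hij
        have h1 : eEmb (σ ⟨i.1, hi⟩) ∈ tᶜ := heMem _
        rw [hij] at h1
        exact absurd (hfMem _) (Finset.mem_compl.mp h1)
      · rw [h8high i hi, h8low j hj] at hij
        have h1 : eEmb (σ ⟨j.1, hj⟩) ∈ tᶜ := heMem _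
        rw [← hij] at h1
        exact absurd (hfMem _) (Finset.mem_compl.mp h1)
      · rw [h8high i hi, h8high j hj] at hij
        have h1 := fEmb.injective hij
        have h2 : i.1 - 5 = j.1 - 5 := congrArg Fin.val h1
        have := i.isLt
        have := j.isLt
        exact Fin.ext (by omega)
    set fC : ℕ → Bool := fun k =>
      χ₁ (h8 ⟨k % 5, by omega⟩) (h8 ⟨5 + (k / 5) % 3, by omega⟩) with hfC
    set vC := vOf fC 15 with hvC
    have hvClt : vC < 32768 := by simpa using vOf_lt fC 15
    have key : ∀ a' b' : Fin 8, a'.1 < 5 → 5 ≤ b'.1 →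
        (code vC).testBit (eidx8 a'.1 b'.1) = χ₁ (h8 a') (h8 b') := by
      intro a' b' hA hB
      obtain ⟨hEq, hLt, hM5, hD5⟩ := factC a' b' hA hB
      rw [hEq, code_mid vC _ hLt, hvC, vOf_testBit fC 15 _ hLt]
      simp only [hfC]
      have e1 : (⟨(5*(b'.1-5)+a'.1) % 5, by omega⟩ : Fin 8) = a' := Fin.ext hM5
      have e2 : (⟨5 + ((5*(b'.1-5)+a'.1) / 5) % 3, by omega⟩ : Fin 8) = b' := Fin.ext hD5
      rw [e1, e2]
    have hagreeC : ∀ a' b' : Fin 8, a' ≠ b' →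
        (code vC).testBit (eidx8 a'.1 b'.1) = χ₁ (h8 a') (h8 b') := by
      intro a' b' hne
      by_cases hA : a'.1 < 5 <;> by_cases hB : b'.1 < 5
      · obtain ⟨h1, h2, h3⟩ := factA a' b' hA hB hne
        rw [code_low vC _ h1, h2, h3, h8low a' hA, h8low b' hB]
        have hvne : a'.1 ≠ b'.1 := fun hh => hne (Fin.ext hh)
        have hq := hagree5 (σ ⟨a'.1, hA⟩) (σ ⟨b'.1, hB⟩)
          (hσinj _ _ (fun hh => hvne (mk_inj hh)))
        have hq2 : (σ ⟨a'.1, hA⟩).1 = sval a'.1 := rfl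
        have hq3 : (σ ⟨b'.1, hB⟩).1 = sval b'.1 := rfl
        rw [hq2, hq3] at hq
        rw [← hq, hpent a'.1 b'.1 hA hB hvne]
      · exact key a' b' hA (by omega)
      · rw [eidx8_symm, hs₁ (h8 a') (h8 b')]
        exact key b' a' hB (by omega)
      · obtain ⟨h1, h2⟩ := factB a' b' (by omega) (by omega) hne
        rw [code_high vC _ hvClt h1 h2, h8high a' hA, h8high b' hB]
        refine (htt _ (hfMem _) _ (hfMem _) ?_).symm
        intro hh
        have h3 := hfinj (congrArg (fun w : Fin 8 => w) hh)
        have h4 : a'.1 - 5 = b'.1 - 5 := congrArg Fin.val (hfinj hh)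
        have := a'.isLt
        have := b'.isLt
        exact hne (Fin.ext (by omega))
    have hokB : okB vC = true := by
      have h1 := allB_spec okB 15 0 okB_all vC (by simpa using vOf_lt fC 15)
      simpa using h1
    rw [okB_eq] at hokB
    obtain ⟨p, hp, hpmono⟩ := List.any_eq_true.mp hokB
    rw [Bool.and_eq_true] at hpmono
    have hpl := pairList_ok _ hp
    obtain ⟨⟨x, y, z⟩, ⟨x', y', z'⟩, m1, m2⟩ := p
    obtain ⟨u1, u2, u3, u4, u5, u6, u7, u8, u9, u10, u11, u12,
      u13, u14, u15, u16, u17, u18, u19, u20, u21, u22, u23⟩ := hpl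
    have hx8 : x < 8 := u1
    have hy8 : y < 8 := u2
    have hz8 : z < 8 := u3
    have ha8 : x' < 8 := u4
    have hb8 : y' < 8 := u5
    have hc8 : z' < 8 := u6
    have hxy : x ≠ y := u7
    have hxz : x ≠ z := u8
    have hyz : y ≠ z := u9
    have hab' : x' ≠ y' := u10
    have hac' : x' ≠ z' := u11
    have hbc' : y' ≠ z' := u12
    have hxa : x ≠ x' := u13
    have hxb : x ≠ y' := u14
    have hxc : x ≠ z' := u15
    have hya : y ≠ x' := u16
    have hyb : y ≠ y' := u17
    have hyc : y ≠ z' := u18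
    have hza : z ≠ x' := u19
    have hzb : z ≠ y' := u20
    have hzc : z ≠ z' := u21
    have hm1 : m1 = maskOf (eidx8 x y) (eidx8 x z) (eidx8 y z) := u22
    have hm2 : m2 = maskOf (eidx8 x' y') (eidx8 x' z') (eidx8 y' z') := u23
    have hbr1 := bridge eidx8 eidx8_symm (code vC) (⟨x, hx8⟩ : Fin 8) ⟨y, hy8⟩ ⟨z, hz8⟩
      (fun hh => hxy (congrArg Fin.val hh)) (fun hh => hxz (congrArg Fin.val hh))
      (fun hh => hyz (congrArg Fin.val hh)) (hm1 ▸ hpmono.1)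
    have hbr2 := bridge eidx8 eidx8_symm (code vC) (⟨x', ha8⟩ : Fin 8) ⟨y', hb8⟩ ⟨z', hc8⟩
      (fun hh => hab' (congrArg Fin.val hh)) (fun hh => hac' (congrArg Fin.val hh))
      (fun hh => hbc' (congrArg Fin.val hh)) (hm2 ▸ hpmono.2)
    have hc1 := mono_map ⟨h8, h8inj⟩ (mono_congr (fun i j hij => hagreeC i j hij) hbr1)
    have hc2 := mono_map ⟨h8, h8inj⟩ (mono_congr (fun i j hij => hagreeC i j hij) hbr2)
    refine ⟨_, _, ?_, flip_mono b0 hc1, flip_mono b0 hc2⟩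
    rw [Finset.disjoint_map]
    rw [Finset.disjoint_left]
    intro u hu1 hu2
    simp only [Finset.mem_insert, Finset.mem_singleton] at hu1 hu2
    rcases hu1 with rfl | rfl | rfl <;> rcases hu2 with h | h | h <;>
      first
        | exact hxa (congrArg Fin.val h)
        | exact hxb (congrArg Fin.val h)
        | exact hxc (congrArg Fin.val h)
        | exact hya (congrArg Fin.val h)
        | exact hyb (congrArg Fin.val h)
        | exact hyc (congrArg Fin.val h)
        | exact hza (congrArg Fin.val h)
        | exact hzb (congrArg Fin.val h)
        | exact hzc (congrArg Fin.val h)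

/-! ### Induction -/

lemma part3 : ∀ m : ℕ, 2 ≤ m →
    ∀ χ : Fin (3 * m + 2) → Fin (3 * m + 2) → Bool, (∀ a b, χ a b = χ b a) →
    ∃ T : Finset (Finset (Fin (3 * m + 2))),
      T.card = m ∧
      (↑T : Set (Finset (Fin (3 * m + 2)))).Pairwise (fun a b => Disjoint a b) ∧
      ∀ t ∈ T, IsMonoTri χ t := by
  intro m hm
  induction m, hm using Nat.le_induction with
  | base =>
    intro χ hs
    obtain ⟨t1, t2, hdis, hm1, hm2⟩ := L8 χ hs
    have hne : t1 ≠ t2 := by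
      rintro rfl
      rw [disjoint_self] at hdis
      rw [hdis] at hm1
      simpa using hm1.1
    refine ⟨{t1, t2}, ?_, ?_, ?_⟩
    · rw [Finset.card_insert_of_notMem (by simpa using hne), Finset.card_singleton]
    · intro u hu w hw huw
      simp only [Finset.coe_insert, Set.mem_insert_iff, Finset.coe_singleton,
        Set.mem_singleton_iff] at hu hw
      rcases hu with rfl | rfl <;> rcases hw with rfl | rfl
      · exact absurd rfl huw
      · exact hdis
      · exact hdis.symm
      · exact absurd rfl huw
    · intro u hu
      rcases Finset.mem_insert.mp hu with rfl | hu
      · exact hm1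
      · rw [Finset.mem_singleton.mp hu]
        exact hm2
  | succ m hm ih =>
    intro χ hs
    obtain ⟨t, ht⟩ := ramsey (by omega) χ hs
    have hscard : tᶜ.card = 3 * m + 2 := by
      rw [Finset.card_compl, ht.1, Fintype.card_fin]
      omega
    set e0 := tᶜ.orderIsoOfFin hscard with he0
    have heinj : Function.Injective (fun i : Fin (3 * m + 2) => (e0 i : Fin (3 * (m+1) + 2))) := by
      intro i j hij
      exact e0.injective (Subtype.ext hij)
    set emb : Fin (3 * m + 2) ↪ Fin (3 * (m+1) + 2) :=
      ⟨fun i => (e0 i : Fin (3 * (m+1) + 2)), heinj⟩ with hemb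
    have hememb : ∀ i, emb i ∈ tᶜ := fun i => (e0 i).2
    obtain ⟨T0, hT0card, hT0pw, hT0mono⟩ := ih (fun i j => χ (emb i) (emb j))
      (fun i j => hs (emb i) (emb j))
    have hdisj : ∀ u : Finset (Fin (3 * m + 2)), Disjoint t (u.map emb) := by
      intro u
      rw [Finset.disjoint_left]
      intro w hwt hwm
      rw [Finset.mem_map] at hwm
      obtain ⟨i, _, rfl⟩ := hwm
      exact Finset.mem_compl.mp (hememb i) hwt
    have htnm : t ∉ T0.image (Finset.map emb) := by
      intro hmem
      rw [Finset.mem_image] at hmem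
      obtain ⟨u0, _, hu0⟩ := hmem
      have := hdisj u0
      rw [hu0, disjoint_self] at this
      rw [this] at ht
      simpa using ht.1
    refine ⟨insert t (T0.image (Finset.map emb)), ?_, ?_, ?_⟩
    · rw [Finset.card_insert_of_notMem htnm,
        Finset.card_image_of_injective _ (Finset.map_injective emb), hT0card]
    · intro u hu w hw huw
      simp only [Finset.coe_insert, Set.mem_insert_iff, Finset.coe_image,
        Set.mem_image, Finset.mem_coe] at hu hw
      rcases hu with rfl | ⟨u0, hu0, rfl⟩ <;> rcases hw with rfl | ⟨w0, hw0, rfl⟩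
      · exact absurd rfl huw
      · exact hdisj w0
      · exact (hdisj u0).symm
      · have hne0 : u0 ≠ w0 := by
          rintro rfl
          exact huw rfl
        rw [Finset.disjoint_map]
        exact hT0pw (Finset.mem_coe.mpr hu0) (Finset.mem_coe.mpr hw0) hne0
    · intro u hu
      rcases Finset.mem_insert.mp hu with rfl | hu
      · exact ht
      · rw [Finset.mem_image] at hu
        obtain ⟨u0, hu0, rfl⟩ := hu
        exact mono_map emb (hT0mono u0 hu0)

lemma part2 : ∀ n : ℕ, 8 ≤ n → ∀ χ : Fin n → Fin n → Bool, (∀ a b, χ a b = χ b a) →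
    ∃ T : Finset (Finset (Fin n)),
      (n - 2) / 3 ≤ T.card ∧
      (↑T : Set (Finset (Fin n))).Pairwise (fun a b => Disjoint a b) ∧
      ∀ t ∈ T, IsMonoTri χ t := by
  intro n hn χ hs
  set m := (n - 2) / 3 with hm
  have hm2 : 2 ≤ m := by omega
  have hle : 3 * m + 2 ≤ n := by omega
  have hinj : Function.Injective (fun i : Fin (3 * m + 2) => (⟨i.1, by omega⟩ : Fin n)) := by
    intro i j hij
    simp only [Fin.mk.injEq] at hij
    exact Fin.ext hij
  set emb : Fin (3 * m + 2) ↪ Fin n := ⟨fun i => ⟨i.1, by omega⟩, hinj⟩ with hemb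
  obtain ⟨T0, hT0card, hT0pw, hT0mono⟩ := part3 m hm2 (fun i j => χ (emb i) (emb j))
    (fun i j => hs (emb i) (emb j))
  refine ⟨T0.image (Finset.map emb), ?_, ?_, ?_⟩
  · rw [Finset.card_image_of_injective _ (Finset.map_injective emb), hT0card]
  · intro u hu w hw huw
    simp only [Finset.coe_image, Set.mem_image, Finset.mem_coe] at hu hw
    obtain ⟨u0, hu0, rfl⟩ := hu
    obtain ⟨w0, hw0, rfl⟩ := hw
    have hne0 : u0 ≠ w0 := by
      rintro rfl
      exact huw rfl
    rw [Finset.disjoint_map]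
    exact hT0pw (Finset.mem_coe.mpr hu0) (Finset.mem_coe.mpr hw0) hne0
  · intro u hu
    rw [Finset.mem_image] at hu
    obtain ⟨u0, hu0, rfl⟩ := hu
    exact mono_map emb (hT0mono u0 hu0)

/-- Moon's theorem, complete-graph case of the tiling theorem: with `δ = n - 1`,
`⌊(2δ - n)/3⌋ = ⌊(n-2)/3⌋`; every 2-edge-coloured `K_n` (`n ≥ 8`) contains `⌊(n-2)/3⌋`
pairwise vertex-disjoint monochromatic triangles; in particular every 2-edge-colouring
of `K_{3m+2}` (`m ≥ 2`) yields `m` pairwise vertex-disjoint monochromatic triangles. -/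
theorem moon_complete_case :
    (∀ n : ℕ, 8 ≤ n → (2 * (n - 1) - n) / 3 = (n - 2) / 3) ∧
    (∀ n : ℕ, 8 ≤ n → ∀ χ : Fin n → Fin n → Bool, (∀ a b, χ a b = χ b a) →
      ∃ T : Finset (Finset (Fin n)),
        (n - 2) / 3 ≤ T.card ∧
        (↑T : Set (Finset (Fin n))).Pairwise (fun a b => Disjoint a b) ∧
        ∀ t ∈ T, IsMonoTri χ t) ∧
    (∀ m : ℕ, 2 ≤ m →
      ∀ χ : Fin (3 * m + 2) → Fin (3 * m + 2) → Bool, (∀ a b, χ a b = χ b a) →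
      ∃ T : Finset (Finset (Fin (3 * m + 2))),
        T.card = m ∧
        (↑T : Set (Finset (Fin (3 * m + 2)))).Pairwise (fun a b => Disjoint a b) ∧
        ∀ t ∈ T, IsMonoTri χ t) := by
  exact ⟨fun n hn => by omega, part2, part3⟩
end
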